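/- arXiv:0908.3316 — 7 statements merged into one kernel-verified Lean document; each statement's English description precedes it below -/
import Mathlib

section
/- Let I = [a,b] be a closed finite interval and let {f_i : I → I | i ∈ Λ} be a family of length-decreasing functions (i.e. |f_i(J)| < |J| for every nonempty subinterval J ⊆ I) such that for each i the maximum and minimum values of f_i on I occur at the endpoints of I, and such that the union of the images ⋃_i Im(f_i) = I. Then the orbit of every x ∈ I under the semigroup generated by the f_i is dense in I. -/
/-!
Every `f i` strictly shrinks distances on `[a, b]`, so the closure `Q` of the orbit of `x` is a
closed set mapped into itself by every `f i`, and by Edelstein's theorem it contains the fixed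
point of every word in the `f i` that has one. Since `f i` takes its extreme values at `a` and
`b` and the images cover `[a, b]`, some `f i` takes the value `b` and some `f j` the value `a` at
an endpoint; this puts `a` and `b` in `Q`.

If `Q ≠ [a, b]`, then `Q` has a gap `(γ₀, δ₀)`, and among the finitely many gaps at least as long
there is a longest one `(γ, δ)`. Its midpoint is `f k u` for some `u ∉ Q`, so `u` lies in a gap
`(γ', δ')`. Now `f k γ'` and `f k δ'` lie in `Q`, hence outside `(γ, δ)`, at distance at least
`(δ - γ) / 2` from `f k u`; as `f k` shrinks distances, `u - γ'` and `δ' - u` both exceed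
`(δ - γ) / 2`, contradicting the maximality of `(γ, δ)`.
-/

open Set Filter Topology Function

def StrictlyContractingOn {α : Type*} [PseudoMetricSpace α] (g : α → α) (s : Set α) : Prop :=
  ∀ ⦃u⦄, u ∈ s → ∀ ⦃v⦄, v ∈ s → u ≠ v → dist (g u) (g v) < dist u v

namespace StrictlyContractingOn

variable {α : Type*} [PseudoMetricSpace α] {g : α → α} {s : Set α}

theorem dist_le (hg : StrictlyContractingOn g s) {u v : α} (hu : u ∈ s) (hv : v ∈ s) :
    dist (g u) (g v) ≤ dist u v := by
  rcases eq_or_ne u v with rfl | huv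
  · simp
  · exact (hg hu hv huv).le

theorem lipschitzOnWith (hg : StrictlyContractingOn g s) : LipschitzOnWith 1 g s :=
  LipschitzOnWith.of_dist_le_mul fun _ hu _ hv => by simpa using hg.dist_le hu hv

theorem continuousOn (hg : StrictlyContractingOn g s) : ContinuousOn g s :=
  hg.lipschitzOnWith.continuousOn

/-- Edelstein's theorem: the distance to the fixed point decreases to some `L`, and a cluster
point `w` of the orbit satisfies `dist w e = L = dist (g w) e`, which forces `w = e`. -/
theorem tendsto_iterate (hg : StrictlyContractingOn g s) (hs : IsCompact s) (hgs : MapsTo g s s)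
    {e x : α} (he : e ∈ s) (hfix : IsFixedPt g e) (hx : x ∈ s) :
    Tendsto (fun n => g^[n] x) atTop (𝓝 e) := by
  have hmem : ∀ n, g^[n] x ∈ s := fun n => hgs.iterate n hx
  set d : ℕ → ℝ := fun n => dist (g^[n] x) e
  have hanti : Antitone d := antitone_nat_of_succ_le fun n => by
    simp only [d, iterate_succ_apply']
    calc dist (g (g^[n] x)) e = dist (g (g^[n] x)) (g e) := by rw [hfix.eq]
      _ ≤ dist (g^[n] x) e := hg.dist_le (hmem n) he
  obtain ⟨L, hL⟩ : ∃ L, Tendsto d atTop (𝓝 L) :=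
    ⟨_, tendsto_atTop_ciInf hanti ⟨0, by rintro _ ⟨n, rfl⟩; exact dist_nonneg⟩⟩
  obtain ⟨w, hw, φ, hφ, hlim⟩ := hs.tendsto_subseq hmem
  have hwL : dist w e = L :=
    tendsto_nhds_unique (hlim.dist tendsto_const_nhds) (hL.comp hφ.tendsto_atTop)
  have hgwL : dist (g w) e = L := by
    have hlim' : Tendsto (fun k => g^[φ k + 1] x) atTop (𝓝 (g w)) := by
      simp only [iterate_succ_apply']
      exact ((hg.continuousOn w hw).tendsto).comp
        (tendsto_nhdsWithin_iff.2 ⟨hlim, Eventually.of_forall fun k => hmem (φ k)⟩)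
    exact tendsto_nhds_unique (hlim'.dist tendsto_const_nhds)
      (hL.comp ((tendsto_add_atTop_nat 1).comp hφ.tendsto_atTop))
  have hL0 : L = 0 := by
    by_contra hL0
    have hwe : w ≠ e := by
      rintro rfl
      exact hL0 (hwL.symm.trans (dist_self w))
    have hlt := hg hw he hwe
    rw [hfix.eq, hgwL, hwL] at hlt
    exact lt_irrefl L hlt
  exact tendsto_iff_dist_tendsto_zero.2 (hL0 ▸ hL)

end StrictlyContractingOn

section Words

variable {α Λ : Type*} {f : Λ → α → α} {s : Set α}

def semigroupOrbit (f : Λ → α → α) (x : α) : Set α :=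
  {y | ∃ w : List Λ, w ≠ [] ∧ y = w.foldr f x}

theorem mapsTo_foldr (hf : ∀ i, MapsTo (f i) s s) (w : List Λ) :
    MapsTo (fun z => w.foldr f z) s s := by
  induction w with
  | nil => exact mapsTo_id s
  | cons i w ih => exact (hf i).comp ih

theorem semigroupOrbit_subset (hf : ∀ i, MapsTo (f i) s s) {x : α} (hx : x ∈ s) :
    semigroupOrbit f x ⊆ s := by
  rintro _ ⟨w, -, rfl⟩
  exact mapsTo_foldr hf w hx

theorem mapsTo_semigroupOrbit (x : α) (i : Λ) :
    MapsTo (f i) (semigroupOrbit f x) (semigroupOrbit f x) := by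
  rintro _ ⟨w, -, rfl⟩
  exact ⟨i :: w, List.cons_ne_nil i w, rfl⟩

theorem iterate_foldr_mem_semigroupOrbit {w : List Λ} (hw : w ≠ []) (x : α) (n : ℕ) :
    (fun z => w.foldr f z)^[n + 1] x ∈ semigroupOrbit f x := by
  induction n with
  | zero => exact ⟨w, hw, rfl⟩
  | succ n ih =>
    obtain ⟨v, hv, hv_eq⟩ := ih
    refine ⟨w ++ v, List.append_ne_nil_of_left_ne_nil hw v, ?_⟩
    rw [iterate_succ_apply', hv_eq, List.foldr_append]

variable [PseudoMetricSpace α]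

theorem dist_foldr_le (hf : ∀ i, MapsTo (f i) s s) (hc : ∀ i, StrictlyContractingOn (f i) s)
    (w : List Λ) {u v : α} (hu : u ∈ s) (hv : v ∈ s) :
    dist (w.foldr f u) (w.foldr f v) ≤ dist u v := by
  induction w with
  | nil => exact le_rfl
  | cons i w ih => exact ((hc i).dist_le (mapsTo_foldr hf w hu) (mapsTo_foldr hf w hv)).trans ih

theorem strictlyContractingOn_foldr (hf : ∀ i, MapsTo (f i) s s)
    (hc : ∀ i, StrictlyContractingOn (f i) s) {w : List Λ} (hw : w ≠ []) :
    StrictlyContractingOn (fun z => w.foldr f z) s := by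
  obtain ⟨v, i, rfl⟩ := (List.eq_nil_or_concat' w).resolve_left hw
  intro u hu u' hu' huu'
  simp only [List.foldr_append, List.foldr_cons, List.foldr_nil]
  exact (dist_foldr_le hf hc v (hf i hu) (hf i hu')).trans_lt (hc i hu hu' huu')

theorem closure_semigroupOrbit_subset (hs : IsClosed s) (hf : ∀ i, MapsTo (f i) s s) {x : α}
    (hx : x ∈ s) : closure (semigroupOrbit f x) ⊆ s :=
  closure_minimal (semigroupOrbit_subset hf hx) hs

theorem mapsTo_closure_semigroupOrbit (hs : IsClosed s) (hf : ∀ i, MapsTo (f i) s s)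
    (hc : ∀ i, StrictlyContractingOn (f i) s) {x : α} (hx : x ∈ s) (i : Λ) :
    MapsTo (f i) (closure (semigroupOrbit f x)) (closure (semigroupOrbit f x)) := by
  intro y hy
  have himage := ((hc i).continuousOn.mono (closure_semigroupOrbit_subset hs hf hx)).image_closure
  exact closure_mono (mapsTo_semigroupOrbit x i).image_subset (himage (mem_image_of_mem _ hy))

theorem mem_closure_semigroupOrbit_of_isFixedPt (hs : IsCompact s) (hf : ∀ i, MapsTo (f i) s s)
    (hc : ∀ i, StrictlyContractingOn (f i) s) {x : α} (hx : x ∈ s) {w : List Λ} (hw : w ≠ [])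
    {e : α} (he : e ∈ s) (hfix : w.foldr f e = e) : e ∈ closure (semigroupOrbit f x) :=
  mem_closure_of_tendsto
    (((strictlyContractingOn_foldr hf hc hw).tendsto_iterate hs (mapsTo_foldr hf w) he hfix
      hx).comp (tendsto_add_atTop_nat 1))
    (Eventually.of_forall (iterate_foldr_mem_semigroupOrbit hw x))

end Words

section Interval

variable {a b : ℝ}

theorem strictlyContractingOn_Icc_of_diam_image_lt {g : ℝ → ℝ}
    (hg : MapsTo g (Icc a b) (Icc a b))
    (hdiam : ∀ c d, a ≤ c → c < d → d ≤ b → Metric.diam (g '' Icc c d) < d - c) :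
    StrictlyContractingOn g (Icc a b) := by
  intro u hu v hv huv
  wlog huv' : u < v generalizing u v
  · rw [dist_comm, dist_comm u]
    exact this hv hu huv.symm (lt_of_le_of_ne (not_lt.1 huv') huv.symm)
  have hbdd : Bornology.IsBounded (g '' Icc u v) :=
    (Metric.isBounded_Icc a b).subset
      ((image_mono (Icc_subset_Icc hu.1 hv.2)).trans hg.image_subset)
  calc dist (g u) (g v)
      ≤ Metric.diam (g '' Icc u v) :=
        Metric.dist_le_diam_of_mem hbdd (mem_image_of_mem g (left_mem_Icc.2 huv'.le))
          (mem_image_of_mem g (right_mem_Icc.2 huv'.le))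
    _ < v - u := hdiam u v hu.1 huv' hv.2
    _ = dist u v := by rw [dist_comm, Real.dist_eq, abs_of_pos (sub_pos.2 huv')]

theorem max_apply_left_apply_right_eq_of_mem_image {g : ℝ → ℝ}
    (hg : MapsTo g (Icc a b) (Icc a b))
    (hend : ∀ x ∈ Icc a b, min (g a) (g b) ≤ g x ∧ g x ≤ max (g a) (g b))
    (hb : b ∈ g '' Icc a b) : max (g a) (g b) = b := by
  obtain ⟨u, hu, hgu⟩ := hb
  have hab : a ≤ b := hu.1.trans hu.2
  exact le_antisymm (max_le (hg (left_mem_Icc.2 hab)).2 (hg (right_mem_Icc.2 hab)).2)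
    (hgu ▸ (hend u hu).2)

theorem min_apply_left_apply_right_eq_of_mem_image {g : ℝ → ℝ}
    (hg : MapsTo g (Icc a b) (Icc a b))
    (hend : ∀ x ∈ Icc a b, min (g a) (g b) ≤ g x ∧ g x ≤ max (g a) (g b))
    (ha : a ∈ g '' Icc a b) : min (g a) (g b) = a := by
  obtain ⟨u, hu, hgu⟩ := ha
  have hab : a ≤ b := hu.1.trans hu.2
  exact le_antisymm (hgu ▸ (hend u hu).1)
    (le_min (hg (left_mem_Icc.2 hab)).1 (hg (right_mem_Icc.2 hab)).1)

/-- Each endpoint is a fixed point of `f i`, `f j` or `f i ∘ f j`, or the image of the other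
endpoint under `f i` or `f j`. -/
theorem left_mem_and_right_mem_closure_semigroupOrbit {Λ : Type*} {f : Λ → ℝ → ℝ}
    (hf : ∀ i, MapsTo (f i) (Icc a b) (Icc a b))
    (hc : ∀ i, StrictlyContractingOn (f i) (Icc a b)) {x : ℝ} (hx : x ∈ Icc a b) {i j : Λ}
    (hi : max (f i a) (f i b) = b) (hj : min (f j a) (f j b) = a) :
    a ∈ closure (semigroupOrbit f x) ∧ b ∈ closure (semigroupOrbit f x) := by
  set Q := closure (semigroupOrbit f x)
  have hab : a ≤ b := hx.1.trans hx.2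
  have haI : a ∈ Icc a b := left_mem_Icc.2 hab
  have hbI : b ∈ Icc a b := right_mem_Icc.2 hab
  have hfix : ∀ w : List Λ, w ≠ [] → ∀ e ∈ Icc a b, w.foldr f e = e → e ∈ Q :=
    fun w hw e he => mem_closure_semigroupOrbit_of_isFixedPt isCompact_Icc hf hc hx hw he
  have hinv := mapsTo_closure_semigroupOrbit isClosed_Icc hf hc hx
  have hb_of_ha : a ∈ Q → b ∈ Q := fun ha => by
    rcases max_choice (f i a) (f i b) with hia | hib
    · exact (hia.symm.trans hi) ▸ hinv i ha
    · exact hfix [i] (List.cons_ne_nil _ _) b hbI (hib.symm.trans hi)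
  have ha_of_hb : b ∈ Q → a ∈ Q := fun hb => by
    rcases min_choice (f j a) (f j b) with hja | hjb
    · exact hfix [j] (List.cons_ne_nil _ _) a haI (hja.symm.trans hj)
    · exact (hjb.symm.trans hj) ▸ hinv j hb
  have ha_or_hb : a ∈ Q ∨ b ∈ Q := by
    rcases max_choice (f i a) (f i b) with hia | hib
    · rcases min_choice (f j a) (f j b) with hja | hjb
      · exact .inl (hfix [j] (List.cons_ne_nil _ _) a haI (hja.symm.trans hj))
      · refine .inr (hfix [i, j] (List.cons_ne_nil _ _) b hbI ?_)
        change f i (f j b) = b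
        rw [hjb.symm.trans hj, hia.symm.trans hi]
    · exact .inr (hfix [i] (List.cons_ne_nil _ _) b hbI (hib.symm.trans hi))
  rcases ha_or_hb with ha | hb
  · exact ⟨ha, hb_of_ha ha⟩
  · exact ⟨ha_of_hb hb, hb⟩

end Interval

section Gaps

def IsGap (Q : Set ℝ) (γ δ : ℝ) : Prop :=
  γ ∈ Q ∧ δ ∈ Q ∧ γ < δ ∧ ∀ q ∈ Q, q ≤ γ ∨ δ ≤ q

variable {Q : Set ℝ} {a b : ℝ}

theorem exists_isGap_mem_Ioo (hQ : IsClosed Q) (ha : a ∈ Q) (hb : b ∈ Q) {t : ℝ}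
    (ht : t ∈ Icc a b) (htQ : t ∉ Q) : ∃ γ δ, IsGap Q γ δ ∧ t ∈ Ioo γ δ := by
  have hbddA : BddAbove (Q ∩ Iic t) := ⟨t, fun _ hq => hq.2⟩
  have hbddB : BddBelow (Q ∩ Ici t) := ⟨t, fun _ hq => hq.2⟩
  have hγ : sSup (Q ∩ Iic t) ∈ Q ∩ Iic t :=
    (hQ.inter isClosed_Iic).csSup_mem ⟨a, ha, ht.1⟩ hbddA
  have hδ : sInf (Q ∩ Ici t) ∈ Q ∩ Ici t :=
    (hQ.inter isClosed_Ici).csInf_mem ⟨b, hb, ht.2⟩ hbddB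
  have hγt : sSup (Q ∩ Iic t) < t := lt_of_le_of_ne hγ.2 fun h => htQ (h ▸ hγ.1)
  have htδ : t < sInf (Q ∩ Ici t) := lt_of_le_of_ne hδ.2 fun h => htQ (h ▸ hδ.1)
  refine ⟨_, _, ⟨hγ.1, hδ.1, hγt.trans htδ, fun q hq => ?_⟩, hγt, htδ⟩
  rcases le_total q t with h | h
  · exact .inl (le_csSup hbddA ⟨hq, h⟩)
  · exact .inr (csInf_le hbddB ⟨hq, h⟩)

theorem IsGap.eq_of_fst_le_of_fst_lt {γ δ γ' δ' : ℝ} (h : IsGap Q γ δ) (h' : IsGap Q γ' δ')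
    (hle : γ ≤ γ') (hlt : γ' < δ) : γ = γ' ∧ δ = δ' := by
  obtain ⟨hγ, hδ, hγδ, hgap⟩ := h
  obtain ⟨hγ', hδ', hγδ', hgap'⟩ := h'
  have hγ_eq : γ = γ' := le_antisymm hle ((hgap γ' hγ').resolve_right hlt.not_ge)
  subst hγ_eq
  refine ⟨rfl, le_antisymm ?_ ?_⟩
  · exact (hgap δ' hδ').resolve_left hγδ'.not_ge
  · exact (hgap' δ hδ).resolve_left hγδ.not_ge

/-- Gaps of length at least `θ` have `θ`-separated left endpoints, so `⌊γ / θ⌋` determines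
the gap. -/
theorem finite_setOf_isGap_le_length (hQab : Q ⊆ Icc a b) {θ : ℝ} (hθ : 0 < θ) :
    {p : ℝ × ℝ | IsGap Q p.1 p.2 ∧ θ ≤ p.2 - p.1}.Finite := by
  set S := {p : ℝ × ℝ | IsGap Q p.1 p.2 ∧ θ ≤ p.2 - p.1}
  have hinj : InjOn (fun p : ℝ × ℝ => ⌊p.1 / θ⌋) S := by
    intro p hp q hq hpq
    have hclose : |p.1 - q.1| < θ := by
      have := Int.abs_sub_lt_one_of_floor_eq_floor hpq
      rwa [← sub_div, abs_div, abs_of_pos hθ, div_lt_one hθ] at this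
    rcases le_total p.1 q.1 with h | h
    · obtain ⟨h1, h2⟩ := hp.1.eq_of_fst_le_of_fst_lt hq.1 h
        (by linarith [abs_sub_lt_iff.1 hclose, hp.2])
      exact Prod.ext h1 h2
    · obtain ⟨h1, h2⟩ := hq.1.eq_of_fst_le_of_fst_lt hp.1 h
        (by linarith [abs_sub_lt_iff.1 hclose, hq.2])
      exact (Prod.ext h1 h2).symm
  refine Finite.of_finite_image ((finite_Icc ⌊a / θ⌋ ⌊b / θ⌋).subset ?_) hinj
  rintro _ ⟨p, hp, rfl⟩
  have hp1 := hQab hp.1.1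
  exact ⟨Int.floor_le_floor (div_le_div_of_nonneg_right hp1.1 hθ.le),
    Int.floor_le_floor (div_le_div_of_nonneg_right hp1.2 hθ.le)⟩

theorem IsGap.exists_isGap_longer {γ δ : ℝ} (h : IsGap Q γ δ) (hQ : IsClosed Q)
    (hQab : Q ⊆ Icc a b) (ha : a ∈ Q) (hb : b ∈ Q) {g : ℝ → ℝ} (hgQ : MapsTo g Q Q)
    (hg : StrictlyContractingOn g (Icc a b)) (hm : (γ + δ) / 2 ∈ g '' Icc a b) :
    ∃ γ' δ', IsGap Q γ' δ' ∧ δ - γ < δ' - γ' := by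
  obtain ⟨hγ, hδ, hγδ, hgap⟩ := h
  obtain ⟨u, hu, hgu⟩ := hm
  have hfar : ∀ q ∈ Q, (δ - γ) / 2 ≤ |q - g u| := fun q hq => by
    rcases hgap q hq with hq' | hq'
    · linarith [neg_abs_le (q - g u)]
    · linarith [le_abs_self (q - g u)]
  have huQ : u ∉ Q := fun huQ => by
    rcases hgap _ (hgQ huQ) with h | h <;> linarith
  obtain ⟨γ', δ', hgap', hu'⟩ := exists_isGap_mem_Ioo hQ ha hb hu huQ
  have hleft : |g γ' - g u| < u - γ' := by
    simpa [Real.dist_eq, abs_of_neg (sub_neg.2 hu'.1)] using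
      hg (hQab hgap'.1) hu hu'.1.ne
  have hright : |g δ' - g u| < δ' - u := by
    simpa [Real.dist_eq, abs_of_pos (sub_pos.2 hu'.2)] using
      hg (hQab hgap'.2.1) hu hu'.2.ne'
  refine ⟨γ', δ', hgap', ?_⟩
  linarith [hfar _ (hgQ hgap'.1), hfar _ (hgQ hgap'.2.1)]

theorem Icc_subset_of_forall_mem_image (hQ : IsClosed Q) (hQab : Q ⊆ Icc a b) (ha : a ∈ Q)
    (hb : b ∈ Q)
    (hcover : ∀ m ∈ Icc a b, ∃ g : ℝ → ℝ,
      MapsTo g Q Q ∧ StrictlyContractingOn g (Icc a b) ∧ m ∈ g '' Icc a b) :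
    Icc a b ⊆ Q := by
  intro t ht
  by_contra htQ
  obtain ⟨γ₀, δ₀, hgap₀, -⟩ := exists_isGap_mem_Ioo hQ ha hb ht htQ
  set S := {p : ℝ × ℝ | IsGap Q p.1 p.2 ∧ δ₀ - γ₀ ≤ p.2 - p.1}
  obtain ⟨⟨γ, δ⟩, ⟨hgap, hlong⟩, hmax⟩ :=
    S.exists_max_image (fun p => p.2 - p.1)
      (finite_setOf_isGap_le_length hQab (sub_pos.2 hgap₀.2.2.1)) ⟨(γ₀, δ₀), hgap₀, le_rfl⟩
  dsimp only at hgap hlong hmax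
  have hmid : (γ + δ) / 2 ∈ Icc a b := by
    obtain ⟨hγa, -⟩ := hQab hgap.1
    obtain ⟨-, hδb⟩ := hQab hgap.2.1
    constructor <;> linarith [hgap.2.2.1]
  obtain ⟨g, hgQ, hg, hm⟩ := hcover _ hmid
  obtain ⟨γ', δ', hgap', hlonger⟩ := hgap.exists_isGap_longer hQ hQab ha hb hgQ hg hm
  have := hmax (γ', δ') ⟨hgap', by dsimp only; linarith⟩
  dsimp only at this
  linarith

end Gaps

theorem stmt_0_general {Λ : Type*} (a b : ℝ) (f : Λ → ℝ → ℝ)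
    (hmaps : ∀ i, Set.MapsTo (f i) (Set.Icc a b) (Set.Icc a b))
    (hdec : ∀ i c d, a ≤ c → c < d → d ≤ b →
      Metric.diam (f i '' Set.Icc c d) < d - c)
    (hend : ∀ i, ∀ x ∈ Set.Icc a b,
      min (f i a) (f i b) ≤ f i x ∧ f i x ≤ max (f i a) (f i b))
    (hunion : (⋃ i, f i '' Set.Icc a b) = Set.Icc a b) :
    ∀ x ∈ Set.Icc a b, Set.Icc a b ⊆
      closure {y | ∃ w : List Λ, w ≠ [] ∧ y = w.foldr (fun i z => f i z) x} := by
  intro x hx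
  have hc i := strictlyContractingOn_Icc_of_diam_image_lt (hmaps i) (hdec i)
  have hcover : ∀ y ∈ Icc a b, ∃ i, y ∈ f i '' Icc a b := fun y hy =>
    mem_iUnion.1 (hunion.symm ▸ hy)
  obtain ⟨i, hi⟩ := hcover b (right_mem_Icc.2 (hx.1.trans hx.2))
  obtain ⟨j, hj⟩ := hcover a (left_mem_Icc.2 (hx.1.trans hx.2))
  obtain ⟨ha, hb⟩ := left_mem_and_right_mem_closure_semigroupOrbit hmaps hc hx
    (max_apply_left_apply_right_eq_of_mem_image (hmaps i) (hend i) hi)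
    (min_apply_left_apply_right_eq_of_mem_image (hmaps j) (hend j) hj)
  refine Icc_subset_of_forall_mem_image isClosed_closure
    (closure_semigroupOrbit_subset isClosed_Icc hmaps hx) ha hb fun m hm => ?_
  obtain ⟨k, hk⟩ := hcover m hm
  exact ⟨f k, mapsTo_closure_semigroupOrbit isClosed_Icc hmaps hc hx k, hc k, hk⟩

/-- family of length-decreasing maps on [a,b] with extrema at endpoints
whose images cover [a,b] has all semigroup orbits dense. -/
theorem stmt_0 {Λ : Type*} (a b : ℝ) (hab : a < b) (f : Λ → ℝ → ℝ)
    (hmaps : ∀ i, Set.MapsTo (f i) (Set.Icc a b) (Set.Icc a b))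
    (hdec : ∀ i c d, a ≤ c → c < d → d ≤ b →
      Metric.diam (f i '' Set.Icc c d) < d - c)
    (hend : ∀ i, ∀ x ∈ Set.Icc a b,
      min (f i a) (f i b) ≤ f i x ∧ f i x ≤ max (f i a) (f i b))
    (hunion : (⋃ i, f i '' Set.Icc a b) = Set.Icc a b) :
    ∀ x ∈ Set.Icc a b, Set.Icc a b ⊆
      closure {y | ∃ w : List Λ, w ≠ [] ∧ y = w.foldr (fun i z => f i z) x} :=
  stmt_0_general a b f hmaps hdec hend hunion
end

section
/- Let I = [a,b] be a compact interval, let f : I → I be length-decreasing with its max and min attained at endpoints of I, and suppose f(a) = a. Then for every x ∈ I, the iterates f^n(x) converge to a as n → ∞. -/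
/-- a length-decreasing map on [a,b] with extrema at endpoints fixing a
has all iterate orbits converging to a. -/
theorem stmt_1 (a b : ℝ) (hab : a < b) (f : ℝ → ℝ)
    (hmaps : Set.MapsTo f (Set.Icc a b) (Set.Icc a b))
    (hdec : ∀ c d, a ≤ c → c < d → d ≤ b →
      Metric.diam (f '' Set.Icc c d) < d - c)
    (hend : ∀ x ∈ Set.Icc a b,
      min (f a) (f b) ≤ f x ∧ f x ≤ max (f a) (f b))
    (hfa : f a = a) :
    ∀ x ∈ Set.Icc a b,
      Filter.Tendsto (fun n => f^[n] x) Filter.atTop (nhds a) := by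
  intro x hx
  -- boundedness of images
  have hbdd : ∀ c d, a ≤ c → d ≤ b → Bornology.IsBounded (f '' Set.Icc c d) := by
    intro c d hc hd
    exact (Metric.isBounded_Icc a b).subset
      ((hmaps.mono_left (Set.Icc_subset_Icc hc hd)).image_subset)
  -- strict contraction for y < z
  have hcontr : ∀ y z, a ≤ y → y < z → z ≤ b → dist (f y) (f z) < z - y := by
    intro y z hy hyz hz
    have h1 : f y ∈ f '' Set.Icc y z := ⟨y, ⟨le_rfl, hyz.le⟩, rfl⟩
    have h2 : f z ∈ f '' Set.Icc y z := ⟨z, ⟨hyz.le, le_rfl⟩, rfl⟩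
    exact lt_of_le_of_lt
      (Metric.dist_le_diam_of_mem (hbdd y z hy (hz.trans (le_refl b))) h1 h2)
      (hdec y z hy hyz hz)
  -- f moves points strictly toward a
  have hlt : ∀ y ∈ Set.Icc a b, a < y → f y < y := by
    intro y hy hay
    have h := hcontr a y le_rfl hay hy.2
    rw [hfa, Real.dist_eq] at h
    linarith [le_abs_self (f y - a), abs_sub_comm a (f y)]
  -- f is 1-Lipschitz on [a,b], hence continuous on it
  have hlip : LipschitzOnWith 1 f (Set.Icc a b) := by
    rw [lipschitzOnWith_iff_dist_le_mul]
    intro y hy z hz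
    rcases lt_trichotomy y z with h | h | h
    · have h1 := hcontr y z hy.1 h hz.2
      have hd : dist y z = z - y := by
        rw [Real.dist_eq, abs_sub_comm, abs_of_nonneg (by linarith)]
      rw [NNReal.coe_one, one_mul, hd]
      exact h1.le
    · simp [h]
    · have h1 := hcontr z y hz.1 h hy.2
      have hd : dist y z = y - z := by
        rw [Real.dist_eq, abs_of_nonneg (by linarith)]
      rw [NNReal.coe_one, one_mul, hd, dist_comm]
      exact h1.le
  have hcont : ContinuousOn f (Set.Icc a b) := hlip.continuousOn
  -- the orbit stays in [a,b]
  have horb : ∀ n, f^[n] x ∈ Set.Icc a b := by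
    intro n
    induction n with
    | zero => simpa using hx
    | succ n ih => rw [Function.iterate_succ_apply']; exact hmaps ih
  -- distances to a are antitone
  have hstep : ∀ n, f^[n+1] x - a ≤ f^[n] x - a := by
    intro n
    rw [Function.iterate_succ_apply']
    rcases eq_or_lt_of_le (horb n).1 with h | h
    · rw [← h, hfa]
    · linarith [hlt _ (horb n) h]
  have hanti : Antitone (fun n => f^[n] x - a) := antitone_nat_of_succ_le hstep
  -- main claim: orbit distance eventually drops below any ε
  have hmain : ∀ ε : ℝ, 0 < ε → ∃ N, f^[N] x - a < ε := by
    intro ε hε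
    by_contra hcon
    push_neg at hcon
    -- orbit stays in K = [a+ε, b]
    have hK : ∀ n, f^[n] x ∈ Set.Icc (a + ε) b := by
      intro n
      exact ⟨by linarith [hcon n], (horb n).2⟩
    have hKsub : Set.Icc (a + ε) b ⊆ Set.Icc a b :=
      Set.Icc_subset_Icc (by linarith) le_rfl
    have hφ : ContinuousOn (fun y => y - f y) (Set.Icc (a + ε) b) :=
      continuousOn_id.sub (hcont.mono hKsub)
    obtain ⟨y₀, hy₀K, hy₀min⟩ :=
      isCompact_Icc.exists_isMinOn ⟨_, hK 0⟩ hφ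
    have hδpos : 0 < y₀ - f y₀ := by
      have : a < y₀ := lt_of_lt_of_le (by linarith) hy₀K.1
      linarith [hlt y₀ (hKsub hy₀K) this]
    set δ := y₀ - f y₀ with hδ
    -- each step decreases distance by at least δ
    have hdecr : ∀ n, f^[n] x - a ≤ f^[0] x - a - n * δ := by
      intro n
      induction n with
      | zero => simp
      | succ n ih =>
        have h1 : δ ≤ f^[n] x - f (f^[n] x) := hy₀min (hK n)
        rw [Function.iterate_succ_apply']
        push_cast
        nlinarith
    obtain ⟨n, hn⟩ := exists_nat_gt ((f^[0] x - a) / δ)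
    have : f^[0] x - a < n * δ := by
      rw [div_lt_iff₀ hδpos] at hn
      linarith
    linarith [hcon n, hdecr n]
  -- conclude convergence
  rw [Metric.tendsto_atTop]
  intro ε hε
  obtain ⟨N, hN⟩ := hmain ε hε
  refine ⟨N, fun n hn => ?_⟩
  rw [Real.dist_eq, abs_of_nonneg (by linarith [(horb n).1])]
  exact lt_of_le_of_lt (hanti hn) hN
end

section
/- Let a, b > 1 ≥ c > 0 with ab − a − c ≥ 0, and define R(x) = ((ab−c)x+c)/((ab−a−c)x+a+c) and T(x) = x/(x+a). For every word f in the semigroup generated by R and T of the form f = R g T^k (where g is empty or does not end in T, k ≥ 0), with m occurrences of R and n occurrences of T in f, there exist reals u, v with u + a^k b^{m−1} + c a^{k−1} b^{m−1} ≥ 0, u + b^m ≥ 0, v ≥ 0, such that f'(x) = a^n b^m / ((b^m + u)x + v + c a^{k−1} b^{m−1})² for all x ∈ [0,1]. -/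
/-!
`R` and `T` are the Möbius maps of the nonnegative matrices `!![ab-c, c; ab-a-c, a+c]` and
`!![1, 0; 1, a]`, so a word `f` acts as the Möbius map of the product matrix `W`, and
`f' = det W / (r x + s)^2` with `(r, s)` the bottom row of `W` and `det W = a^n (a^2 b)^m`.
Every row sum of the matrix of `R` is `ab` and every row sum of the matrix of `T` is at least `1`,
so the prefix before the last `R` has bottom row sum at least `(ab)^(m-1)`; multiplying it by
`R T^k` gives `r ≥ (ab-a-c) (ab)^(m-1)` and `s ≥ c a^k (ab)^(m-1)`. Dividing `(r, s)` by `a^m`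
yields `u` and `v`.
-/

/-- Apply a word (head is the outermost map): `true` codes `R`, `false` codes `T`. -/
def wordApply (R T : ℝ → ℝ) (w : List Bool) (x : ℝ) : ℝ :=
  w.foldr (fun s z => if s then R z else T z) x

open Matrix

noncomputable section Moebius

def moebiusDenom (M : Matrix (Fin 2) (Fin 2) ℝ) (x : ℝ) : ℝ := M 1 0 * x + M 1 1

def moebius (M : Matrix (Fin 2) (Fin 2) ℝ) (x : ℝ) : ℝ := (M 0 0 * x + M 0 1) / moebiusDenom M x

variable {M N : Matrix (Fin 2) (Fin 2) ℝ} {x : ℝ}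

lemma moebiusDenom_mul (M : Matrix (Fin 2) (Fin 2) ℝ) (hx : moebiusDenom N x ≠ 0) :
    moebiusDenom (M * N) x = moebiusDenom M (moebius N x) * moebiusDenom N x := by
  simp only [moebius, moebiusDenom, mul_apply, Fin.sum_univ_two] at hx ⊢
  field_simp
  ring

lemma moebius_mul (M : Matrix (Fin 2) (Fin 2) ℝ) (hx : moebiusDenom N x ≠ 0) :
    moebius (M * N) x = moebius M (moebius N x) := by
  have hnum : (M * N) 0 0 * x + (M * N) 0 1 = (M 0 0 * moebius N x + M 0 1) * moebiusDenom N x := by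
    simp only [moebius, mul_apply, Fin.sum_univ_two]
    field_simp
    simp only [moebiusDenom]
    ring
  rw [moebius, moebiusDenom_mul M hx, hnum, mul_div_mul_right _ _ hx]
  rfl

lemma hasDerivAt_moebius (hx : moebiusDenom M x ≠ 0) :
    HasDerivAt (moebius M) (M.det / moebiusDenom M x ^ 2) x := by
  have hnum := ((hasDerivAt_id x).const_mul (M 0 0)).add_const (M 0 1)
  have hden := ((hasDerivAt_id x).const_mul (M 1 0)).add_const (M 1 1)
  refine (hnum.div hden hx).congr_deriv ?_
  rw [det_fin_two, moebiusDenom]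
  simp only [id, mul_one]
  ring

def nonnegMoebiusSubmonoid : Submonoid (Matrix (Fin 2) (Fin 2) ℝ) where
  carrier := {M | (∀ i j, 0 ≤ M i j) ∧ 0 < M 1 1}
  one_mem' := ⟨fun i j => by fin_cases i <;> fin_cases j <;> simp, by simp⟩
  mul_mem' := by
    rintro M N ⟨hM, hM11⟩ ⟨hN, hN11⟩
    refine ⟨fun i j => ?_, ?_⟩
    · rw [mul_apply]
      exact Finset.sum_nonneg fun l _ => mul_nonneg (hM i l) (hN l j)
    · simp only [mul_apply, Fin.sum_univ_two]
      nlinarith [mul_nonneg (hM 1 0) (hN 0 1)]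

lemma moebiusDenom_pos (hM : M ∈ nonnegMoebiusSubmonoid) (hx : 0 ≤ x) : 0 < moebiusDenom M x :=
  add_pos_of_nonneg_of_pos (mul_nonneg (hM.1 1 0) hx) hM.2

lemma moebius_nonneg (hM : M ∈ nonnegMoebiusSubmonoid) (hx : 0 ≤ x) : 0 ≤ moebius M x :=
  div_nonneg (add_nonneg (mul_nonneg (hM.1 0 0) hx) (hM.1 0 1)) (moebiusDenom_pos hM hx).le

lemma HasDerivAt.moebius_comp {g : ℝ → ℝ} (hM : M ∈ nonnegMoebiusSubmonoid)
    (hN : N ∈ nonnegMoebiusSubmonoid) (hx : 0 ≤ x) (hgx : g x = moebius N x)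
    (hg : HasDerivAt g (N.det / moebiusDenom N x ^ 2) x) :
    HasDerivAt (fun y => moebius M (g y)) ((M * N).det / moebiusDenom (M * N) x ^ 2) x := by
  have hNx := (moebiusDenom_pos hN hx).ne'
  have hMgx := (moebiusDenom_pos hM (hgx ▸ moebius_nonneg hN hx)).ne'
  refine ((hasDerivAt_moebius hMgx).comp x hg).congr_deriv ?_
  rw [det_mul, moebiusDenom_mul M hNx, ← hgx]
  field_simp

end Moebius

section RowSums

variable {n : Type*} [Fintype n]

lemma le_sum_mul_apply {M N : Matrix n n ℝ} {α β : ℝ} (hM : ∀ i j, 0 ≤ M i j)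
    (hMα : ∀ i, α ≤ ∑ j, M i j) (hβ : 0 ≤ β) (hNβ : ∀ i, β ≤ ∑ j, N i j) (i : n) :
    α * β ≤ ∑ j, (M * N) i j := calc
  α * β ≤ ∑ l, M i l * β := by rw [← Finset.sum_mul]; exact mul_le_mul_of_nonneg_right (hMα i) hβ
  _ ≤ ∑ l, M i l * ∑ j, N l j := by gcongr with l; exacts [hM i l, hNβ l]
  _ = ∑ j, (M * N) i j := by simp only [mul_apply, Finset.mul_sum]; exact Finset.sum_comm

end RowSums

section Words

variable {A B : Matrix (Fin 2) (Fin 2) ℝ}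

def wordMatrix (A B : Matrix (Fin 2) (Fin 2) ℝ) (w : List Bool) : Matrix (Fin 2) (Fin 2) ℝ :=
  (w.map fun s => if s then A else B).prod

lemma wordMatrix_cons (s : Bool) (w : List Bool) :
    wordMatrix A B (s :: w) = (if s then A else B) * wordMatrix A B w :=
  List.prod_cons

lemma wordMatrix_mem (hA : A ∈ nonnegMoebiusSubmonoid) (hB : B ∈ nonnegMoebiusSubmonoid)
    (w : List Bool) : wordMatrix A B w ∈ nonnegMoebiusSubmonoid :=
  Submonoid.list_prod_mem _ fun M hM => by
    obtain ⟨s, -, rfl⟩ := List.mem_map.1 hM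
    cases s <;> assumption

lemma det_wordMatrix (w : List Bool) :
    (wordMatrix A B w).det = A.det ^ w.count true * B.det ^ w.count false := by
  induction w with
  | nil => simp [wordMatrix]
  | cons s w ih =>
    cases s <;> simp [wordMatrix_cons, ih, pow_succ] <;> ring

lemma wordApply_moebius (hA : A ∈ nonnegMoebiusSubmonoid) (hB : B ∈ nonnegMoebiusSubmonoid)
    (w : List Bool) {x : ℝ} (hx : 0 ≤ x) :
    wordApply (moebius A) (moebius B) w x = moebius (wordMatrix A B w) x ∧
      HasDerivAt (wordApply (moebius A) (moebius B) w)
        ((wordMatrix A B w).det / moebiusDenom (wordMatrix A B w) x ^ 2) x := by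
  induction w with
  | nil =>
    exact ⟨by simp [wordApply, wordMatrix, moebius, moebiusDenom],
      (hasDerivAt_id x).congr_deriv (by simp [wordMatrix, moebiusDenom])⟩
  | cons s w ih =>
    have hW := wordMatrix_mem hA hB w
    have step : ∀ M ∈ nonnegMoebiusSubmonoid,
        moebius M (wordApply (moebius A) (moebius B) w x) = moebius (M * wordMatrix A B w) x ∧
        HasDerivAt (fun y => moebius M (wordApply (moebius A) (moebius B) w y))
          ((M * wordMatrix A B w).det / moebiusDenom (M * wordMatrix A B w) x ^ 2) x :=
      fun M hM => ⟨by rw [ih.1, moebius_mul M (moebiusDenom_pos hW hx).ne'],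
        ih.2.moebius_comp hM hW hx ih.1⟩
    cases s
    · exact step B hB
    · exact step A hA

lemma le_sum_wordMatrix_apply {α β : ℝ} (hα : 0 ≤ α) (hβ : 0 ≤ β) (hA : ∀ i j, 0 ≤ A i j)
    (hB : ∀ i j, 0 ≤ B i j) (hAα : ∀ i, α ≤ ∑ j, A i j) (hBβ : ∀ i, β ≤ ∑ j, B i j)
    (w : List Bool) (i : Fin 2) :
    α ^ w.count true * β ^ w.count false ≤ ∑ j, wordMatrix A B w i j := by
  induction w generalizing i with
  | nil => fin_cases i <;> simp [wordMatrix]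
  | cons s w ih =>
    have hw : 0 ≤ α ^ w.count true * β ^ w.count false := by positivity
    cases s
    · convert le_sum_mul_apply hB hBβ hw ih i using 1 <;> simp [wordMatrix_cons, pow_succ]
      ring
    · convert le_sum_mul_apply hA hAα hw ih i using 1 <;> simp [wordMatrix_cons, pow_succ]
      ring

lemma wordMatrix_append (u v : List Bool) :
    wordMatrix A B (u ++ v) = wordMatrix A B u * wordMatrix A B v := by
  simp [wordMatrix]

lemma wordMatrix_replicate_false (k : ℕ) : wordMatrix A B (List.replicate k false) = B ^ k := by
  simp [wordMatrix]

end Words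

section Generators

variable {a b c : ℝ}

def rMatrix (a b c : ℝ) : Matrix (Fin 2) (Fin 2) ℝ := !![a * b - c, c; a * b - a - c, a + c]

def tMatrix (a : ℝ) : Matrix (Fin 2) (Fin 2) ℝ := !![1, 0; 1, a]

lemma moebius_rMatrix (x : ℝ) :
    moebius (rMatrix a b c) x = ((a * b - c) * x + c) / ((a * b - a - c) * x + (a + c)) := by
  simp [moebius, moebiusDenom, rMatrix]

lemma moebius_tMatrix (x : ℝ) : moebius (tMatrix a) x = x / (x + a) := by
  simp [moebius, moebiusDenom, tMatrix]

lemma det_rMatrix : (rMatrix a b c).det = a ^ 2 * b := by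
  rw [rMatrix, det_fin_two_of]
  ring

lemma det_tMatrix : (tMatrix a).det = a := by
  simp [tMatrix, det_fin_two_of]

lemma rMatrix_mem (ha : 0 < a) (hc : 0 < c) (habc : 0 ≤ a * b - a - c) :
    rMatrix a b c ∈ nonnegMoebiusSubmonoid :=
  ⟨fun i j => by fin_cases i <;> fin_cases j <;> simp [rMatrix] <;> linarith,
    by simp [rMatrix]; linarith⟩

lemma tMatrix_mem (ha : 0 < a) : tMatrix a ∈ nonnegMoebiusSubmonoid :=
  ⟨fun i j => by fin_cases i <;> fin_cases j <;> simp [tMatrix]; exact ha.le,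
    by simpa [tMatrix] using ha⟩

lemma sum_rMatrix_apply (i : Fin 2) : ∑ j, rMatrix a b c i j = a * b := by
  fin_cases i <;> simp [rMatrix, Fin.sum_univ_two]

lemma one_le_sum_tMatrix_apply (ha : 0 ≤ a) (i : Fin 2) : 1 ≤ ∑ j, tMatrix a i j := by
  fin_cases i <;> simp [tMatrix, Fin.sum_univ_two, ha]

lemma tMatrix_pow (k : ℕ) : tMatrix a ^ k = !![1, 0; ∑ i ∈ Finset.range k, a ^ i, a ^ k] := by
  induction k with
  | zero => exact (one_fin_two).trans (by simp)
  | succ k ih =>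
    rw [pow_succ, ih, tMatrix, mul_fin_two, Finset.sum_range_succ, pow_succ]
    simp

lemma bottomRow_mul_rMatrix_mul_tMatrix_pow_ge (ha : 0 < a) (hc : 0 < c)
    (habc : 0 ≤ a * b - a - c) {N : Matrix (Fin 2) (Fin 2) ℝ} (hN : ∀ i j, 0 ≤ N i j) {t : ℝ}
    (ht : t ≤ N 1 0 + N 1 1) (k : ℕ) :
    (a * b - a - c) * t ≤ (N * (rMatrix a b c * tMatrix a ^ k)) 1 0 ∧
      c * t * a ^ k ≤ (N * (rMatrix a b c * tMatrix a ^ k)) 1 1 := by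
  have hS : 0 ≤ ∑ i ∈ Finset.range k, a ^ i := Finset.sum_nonneg fun i _ => by positivity
  have hak : 0 ≤ a ^ k := by positivity
  have h10 := hN 1 0
  have h11 := hN 1 1
  simp only [tMatrix_pow, rMatrix, mul_apply, Fin.sum_univ_two, of_apply, cons_val', cons_val_zero,
    cons_val_one, empty_val', cons_val_fin_one]
  constructor
  · nlinarith [mul_nonneg h10 (by positivity : 0 ≤ a + c * ∑ i ∈ Finset.range k, a ^ i),
      mul_nonneg h11 (by positivity : 0 ≤ (a + c) * ∑ i ∈ Finset.range k, a ^ i),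
      mul_le_mul_of_nonneg_left ht habc]
  · nlinarith [mul_nonneg h11 (by positivity : 0 ≤ a * a ^ k),
      mul_le_mul_of_nonneg_left ht (by positivity : 0 ≤ c * a ^ k)]

lemma bottomRow_wordMatrix_ge (ha : 0 < a) (hc : 0 < c) (habc : 0 ≤ a * b - a - c)
    (u : List Bool) (k : ℕ) :
    (a * b - a - c) * (a * b) ^ u.count true ≤
        wordMatrix (rMatrix a b c) (tMatrix a) (u ++ true :: List.replicate k false) 1 0 ∧
      c * (a * b) ^ u.count true * a ^ k ≤
        wordMatrix (rMatrix a b c) (tMatrix a) (u ++ true :: List.replicate k false) 1 1 := by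
  have hR := rMatrix_mem ha hc habc
  have hT := tMatrix_mem ha
  have hsum : (a * b) ^ u.count true ≤
      wordMatrix (rMatrix a b c) (tMatrix a) u 1 0 + wordMatrix (rMatrix a b c) (tMatrix a) u 1 1 := by
    simpa [Fin.sum_univ_two] using le_sum_wordMatrix_apply (by nlinarith) zero_le_one hR.1 hT.1
      (fun i => (sum_rMatrix_apply i).ge) (fun i => one_le_sum_tMatrix_apply ha.le i) u 1
  rw [wordMatrix_append, wordMatrix_cons, if_pos rfl, wordMatrix_replicate_false]
  exact bottomRow_mul_rMatrix_mul_tMatrix_pow_ge ha hc habc (wordMatrix_mem hR hT u).1 hsum k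

end Generators

lemma deriv_wordApply_rMatrix_tMatrix {a b c : ℝ} (ha : 0 < a) (hc : 0 < c)
    (habc : 0 ≤ a * b - a - c) (w : List Bool) {x : ℝ} (hx : 0 ≤ x) :
    deriv (wordApply (moebius (rMatrix a b c)) (moebius (tMatrix a)) w) x =
      a ^ w.count false * (a ^ 2 * b) ^ w.count true /
        moebiusDenom (wordMatrix (rMatrix a b c) (tMatrix a) w) x ^ 2 := by
  rw [(wordApply_moebius (rMatrix_mem ha hc habc) (tMatrix_mem ha) w hx).2.deriv, det_wordMatrix,
    det_rMatrix, det_tMatrix, mul_comm]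

lemma List.exists_append_true_replicate {g : List Bool} (hg : g = [] ∨ g.getLast? ≠ some false)
    (k : ℕ) : ∃ u, true :: (g ++ List.replicate k false) = u ++ true :: List.replicate k false := by
  have hlast : (true :: g).getLast? = some true := by
    rcases hg with rfl | hg
    · rfl
    · cases h : g.getLast? <;> simp_all [List.getLast?_cons]
  refine ⟨(true :: g).dropLast, ?_⟩
  rw [← List.cons_append, ← List.dropLast_append_getLast? true hlast]
  simp

lemma exists_shifts_of_bottomRow_ge {a b c r s : ℝ} (ha : 1 < a) (hb : 0 < b) (hc : 0 < c)
    (habc : 0 ≤ a * b - a - c) {m k : ℕ} (hr : (a * b - a - c) * (a * b) ^ m ≤ r)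
    (hs : c * (a * b) ^ m * a ^ k ≤ s) :
    ∃ u v : ℝ, 0 ≤ u + a ^ k * b ^ m + c * (a ^ k * a⁻¹) * b ^ m ∧ 0 ≤ u + b ^ (m + 1) ∧ 0 ≤ v ∧
      ∀ x, (b ^ (m + 1) + u) * x + v + c * (a ^ k * a⁻¹) * b ^ m = (r * x + s) / a ^ (m + 1) := by
  have ha0 : 0 < a := by linarith
  have hr' : (a * b - a - c) * b ^ m / a ≤ r / a ^ (m + 1) := by
    rw [div_le_div_iff₀ ha0 (by positivity)]
    calc (a * b - a - c) * b ^ m * a ^ (m + 1) = (a * b - a - c) * (a * b) ^ m * a := by ring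
      _ ≤ r * a := mul_le_mul_of_nonneg_right hr ha0.le
  refine ⟨r / a ^ (m + 1) - b ^ (m + 1), s / a ^ (m + 1) - c * (a ^ k * a⁻¹) * b ^ m,
    ?_, ?_, ?_, fun x => by ring⟩
  · have key : (a * b - a - c) * b ^ m / a - b ^ (m + 1) + a ^ k * b ^ m + c * (a ^ k * a⁻¹) * b ^ m
        = b ^ m * (a ^ k - 1) * (1 + c / a) := by
      field_simp
      ring
    have : 0 ≤ b ^ m * (a ^ k - 1) * (1 + c / a) :=
      mul_nonneg (mul_nonneg (by positivity) (sub_nonneg.2 (one_le_pow₀ ha.le))) (by positivity)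
    linarith
  · rw [sub_add_cancel]
    exact (div_nonneg (mul_nonneg habc (by positivity)) ha0.le).trans hr'
  · rw [sub_nonneg, le_div_iff₀ (by positivity)]
    calc c * (a ^ k * a⁻¹) * b ^ m * a ^ (m + 1) = c * (a * b) ^ m * a ^ k := by
          field_simp
          ring
      _ ≤ s := hs

theorem stmt_5_general (a b c : ℝ) (ha : 1 < a) (hb : 1 < b) (hc0 : 0 < c)
    (habc : 0 ≤ a * b - a - c)
    (R T : ℝ → ℝ)
    (hR : ∀ x : ℝ, R x = ((a * b - c) * x + c) / ((a * b - a - c) * x + (a + c)))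
    (hT : ∀ x : ℝ, T x = x / (x + a))
    (g : List Bool) (hg : g = [] ∨ g.getLast? ≠ some false) (k : ℕ)
    (w : List Bool) (hw : w = true :: (g ++ List.replicate k false)) :
    ∃ u v : ℝ,
      0 ≤ u + a ^ (k : ℤ) * b ^ ((w.count true : ℤ) - 1)
            + c * a ^ ((k : ℤ) - 1) * b ^ ((w.count true : ℤ) - 1) ∧
      0 ≤ u + b ^ ((w.count true : ℤ)) ∧
      0 ≤ v ∧
      ∀ x ∈ Set.Icc (0:ℝ) 1,
        deriv (wordApply R T w) x =
          a ^ ((w.count false : ℤ)) * b ^ ((w.count true : ℤ)) /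
            ((b ^ ((w.count true : ℤ)) + u) * x + v
              + c * a ^ ((k : ℤ) - 1) * b ^ ((w.count true : ℤ) - 1)) ^ 2 := by
  have ha0 : 0 < a := by linarith
  obtain rfl : R = moebius (rMatrix a b c) := funext fun x => (hR x).trans (moebius_rMatrix x).symm
  obtain rfl : T = moebius (tMatrix a) := funext fun x => (hT x).trans (moebius_tMatrix x).symm
  obtain ⟨q, hq⟩ := List.exists_append_true_replicate hg k
  have hm : w.count true = q.count true + 1 := by simp [hw, hq, List.count_replicate]
  have hm' : (w.count true : ℤ) - 1 = (q.count true : ℕ) := by rw [hm]; push_cast; ring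
  obtain ⟨hr, hs⟩ := bottomRow_wordMatrix_ge ha0 hc0 habc q k
  rw [← hq, ← hw] at hr hs
  obtain ⟨u, v, hu, hub, hv, hden⟩ := exists_shifts_of_bottomRow_ge ha (by linarith) hc0 habc hr hs
  simp only [hm', zpow_natCast, zpow_sub_one₀ ha0.ne']
  refine ⟨u, v, hu, hm ▸ hub, hv, fun x hx => ?_⟩
  rw [deriv_wordApply_rMatrix_tMatrix ha0 hc0 habc w hx.1, hm, hden, moebiusDenom, div_pow,
    div_div_eq_mul_div]
  ring

/-- derivative formula for words of the form R g T^k in the semigroup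
generated by R(x) = ((ab−c)x+c)/((ab−a−c)x+a+c) and T(x) = x/(x+a). -/
theorem stmt_5 (a b c : ℝ) (ha : 1 < a) (hb : 1 < b) (hc1 : c ≤ 1) (hc0 : 0 < c)
    (habc : 0 ≤ a * b - a - c)
    (R T : ℝ → ℝ)
    (hR : ∀ x : ℝ, R x = ((a * b - c) * x + c) / ((a * b - a - c) * x + (a + c)))
    (hT : ∀ x : ℝ, T x = x / (x + a))
    (g : List Bool) (hg : g = [] ∨ g.getLast? ≠ some false) (k : ℕ)
    (w : List Bool) (hw : w = true :: (g ++ List.replicate k false)) :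
    ∃ u v : ℝ,
      0 ≤ u + a ^ (k : ℤ) * b ^ ((w.count true : ℤ) - 1)
            + c * a ^ ((k : ℤ) - 1) * b ^ ((w.count true : ℤ) - 1) ∧
      0 ≤ u + b ^ ((w.count true : ℤ)) ∧
      0 ≤ v ∧
      ∀ x ∈ Set.Icc (0:ℝ) 1,
        deriv (wordApply R T w) x =
          a ^ ((w.count false : ℤ)) * b ^ ((w.count true : ℤ)) /
            ((b ^ ((w.count true : ℤ)) + u) * x + v
              + c * a ^ ((k : ℤ) - 1) * b ^ ((w.count true : ℤ) - 1)) ^ 2 :=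
  stmt_5_general a b c ha hb hc0 habc R T hR hT g hg k w hw
end

section
/- Let a > 1 ≥ c > 0 and b > 1 with ab − a − c ≤ 0, and let R(x) = ((ab−c)x+c)/((ab−a−c)x+a+c). Then |R'(x)| ≤ 1/b < 1 for all x ∈ [0,1], i.e. the maximum of R'(x) on [0,1] is at most 1/b. -/
/-- when ab − a − c ≤ 0, the derivative of R is bounded by 1/b < 1
on [0,1]. -/
theorem stmt_7 (a b c : ℝ) (ha : 1 < a) (hb : 1 < b) (hc1 : c ≤ 1) (hc0 : 0 < c)
    (habc : a * b - a - c ≤ 0)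
    (R : ℝ → ℝ)
    (hR : ∀ x : ℝ, R x = ((a * b - c) * x + c) / ((a * b - a - c) * x + (a + c))) :
    (∀ x ∈ Set.Icc (0:ℝ) 1, |deriv R x| ≤ 1 / b) ∧ 1 / b < 1 := by
  have hb0 : (0:ℝ) < b := by linarith
  constructor
  · intro x hx
    have ha0 : (0:ℝ) < a := by linarith
    set q := a * b - a - c with hq
    set s := a + c with hs
    have hden : a * b ≤ q * x + s := by
      have h1 := hx.1; have h2 := hx.2
      nlinarith
    have hab : 0 < a * b := by positivity
    have hdpos : 0 < q * x + s := lt_of_lt_of_le hab hden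
    have hRe : R = fun x => ((a * b - c) * x + c) / (q * x + s) := funext hR
    have h1 : HasDerivAt (fun x : ℝ => (a * b - c) * x + c) (a * b - c) x := by
      simpa using ((hasDerivAt_id x).const_mul (a * b - c)).add_const c
    have h2 : HasDerivAt (fun x : ℝ => q * x + s) q x := by
      simpa using ((hasDerivAt_id x).const_mul q).add_const s
    have hD : HasDerivAt R
        (((a * b - c) * (q * x + s) - ((a * b - c) * x + c) * q) / (q * x + s) ^ 2) x := by
      rw [hRe]; exact h1.div h2 (ne_of_gt hdpos)
    rw [hD.deriv]
    have hnum : (a * b - c) * (q * x + s) - ((a * b - c) * x + c) * q = a ^ 2 * b := by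
      rw [hq, hs]; ring
    rw [hnum]
    have hpos : 0 < a ^ 2 * b / (q * x + s) ^ 2 := by positivity
    rw [abs_of_pos hpos, div_le_div_iff₀ (by positivity) hb0]
    nlinarith
  · rw [div_lt_one hb0]; exact hb
end

section
/- Let f, g : [0,1] → [0,1] be increasing Möbius transformations, neither of which is onto. If the orbit of some x₀ ∈ (0,1) under the semigroup generated by f and g is dense in [0,1], then Im(f) ∪ Im(g) = [0,1] and {o(f), o(g)} = {0,1}, where o(h) denotes the attracting fixed point of h. -/
/-- `f` is a Möbius (fractional linear) map on `[0,1]`. -/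
def IsMobiusOn (f : ℝ → ℝ) : Prop :=
  ∃ A B C D : ℝ, A * D - B * C ≠ 0 ∧
    ∀ x ∈ Set.Icc (0:ℝ) 1, C * x + D ≠ 0 ∧ f x = (A * x + B) / (C * x + D)

/-- `θ` is an attracting fixed point of `f` in `[0,1]`. -/
def IsAttractingFixedPt (f : ℝ → ℝ) (θ : ℝ) : Prop :=
  θ ∈ Set.Icc (0:ℝ) 1 ∧ f θ = θ ∧ ∃ ε > 0, ∀ x ∈ Set.Icc (0:ℝ) 1, |x - θ| < ε →
    Filter.Tendsto (fun n => f^[n] x) Filter.atTop (nhds θ)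

/-!
The orbit points `applyWord f g w x₀` with `w ≠ []` lie in the compact set `f [0,1] ∪ g [0,1]`,
so density forces this set to be `[0,1]`. Monotonicity and non-surjectivity then force one map,
say `f`, to satisfy `f 0 = 0`, `f 1 < 1`, and the other `g 0 > 0`, `g 1 = 1`.

Fixing `0`, the Möbius map is `f x = b x / (c x + 1)` with `c x + 1 > 0`, so on `(0,1]` the sign
of `f x - x` is that of the affine function `b - 1 - c x`, which is negative at `1`. If `f a ≥ a`
for some `a ∈ (0,1]`, then `f x ≥ x` on `(0,a]`, so `[δ,1]` is invariant under `f` and `g` for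
small `δ > 0`, and the orbit would avoid a neighbourhood of `0`. Hence `f x < x` on `(0,1]` and
every `f`-orbit decreases to `0`. Conjugating by `x ↦ 1 - x` gives the same for `g` and `1`.
-/

open Set Filter Function Topology

theorem pos_of_forall_mem_Icc_ne_zero {c : ℝ} (h : ∀ x ∈ Icc (0:ℝ) 1, c * x + 1 ≠ 0)
    {x : ℝ} (hx : x ∈ Icc (0:ℝ) 1) : 0 < c * x + 1 := by
  by_contra! hneg
  have hc : 0 < -c := by nlinarith [hx.1]
  have hroot : (-c)⁻¹ ∈ Icc (0:ℝ) 1 :=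
    ⟨by positivity, ((inv_le_iff_one_le_mul₀' hc).2 (by linarith)).trans hx.2⟩
  exact h _ hroot (by rw [inv_neg, mul_neg, mul_inv_cancel₀ (neg_ne_zero.1 hc.ne')]; ring)

namespace IsMobiusOn

variable {f : ℝ → ℝ}

theorem continuousOn (hf : IsMobiusOn f) : ContinuousOn f (Icc 0 1) := by
  obtain ⟨A, B, C, D, -, h⟩ := hf
  have hcont : ContinuousOn (fun x => (A * x + B) / (C * x + D)) (Icc 0 1) :=
    ContinuousOn.div (by fun_prop) (by fun_prop) fun x hx => (h x hx).1
  exact hcont.congr fun x hx => (h x hx).2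

theorem exists_eq_mul_div_of_map_zero (hf : IsMobiusOn f) (hf0 : f 0 = 0) :
    ∃ a c : ℝ, ∀ x ∈ Icc (0:ℝ) 1, 0 < c * x + 1 ∧ f x = a * x / (c * x + 1) := by
  obtain ⟨A, B, C, D, -, h⟩ := hf
  have hD : D ≠ 0 := by simpa using (h 0 (left_mem_Icc.2 zero_le_one)).1
  have hB : B = 0 := by
    have h0 := (h 0 (left_mem_Icc.2 zero_le_one)).2
    simp only [hf0, mul_zero, zero_add] at h0
    exact (div_eq_zero_iff.1 h0.symm).resolve_right hD
  have hden : ∀ x ∈ Icc (0:ℝ) 1, C / D * x + 1 ≠ 0 := fun x hx => by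
    rw [div_mul_eq_mul_div, div_add_one hD]
    exact div_ne_zero (h x hx).1 hD
  refine ⟨A / D, C / D, fun x hx => ⟨pos_of_forall_mem_Icc_ne_zero hden hx, ?_⟩⟩
  have hne := (h x hx).1
  rw [(h x hx).2, hB, add_zero]
  field_simp

theorem self_le_of_le_map (hf : IsMobiusOn f) (hf0 : f 0 = 0) (hf1 : f 1 < 1) {a : ℝ}
    (ha : a ∈ Ioc (0:ℝ) 1) (hfa : a ≤ f a) {x : ℝ} (hx : x ∈ Ioc (0:ℝ) a) : x ≤ f x := by
  obtain ⟨b, c, h⟩ := hf.exists_eq_mul_div_of_map_zero hf0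
  have key : ∀ y ∈ Ioc (0:ℝ) 1, y ≤ f y ↔ c * y + 1 ≤ b := fun y hy => by
    obtain ⟨hpos, hfy⟩ := h y (Ioc_subset_Icc_self hy)
    rw [hfy, le_div_iff₀ hpos, mul_comm b, mul_le_mul_iff_right₀ hy.1]
  have h1 : b < c * 1 + 1 := not_le.1 fun h' => hf1.not_ge ((key 1 ⟨one_pos, le_rfl⟩).2 h')
  have ha' := (key a ha).1 hfa
  have hc : 0 < c := by nlinarith [ha.2]
  refine (key x ⟨hx.1, hx.2.trans ha.2⟩).2 ?_
  nlinarith [mul_le_mul_of_nonneg_left hx.2 hc.le]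

end IsMobiusOn

def reflect (h : ℝ → ℝ) : ℝ → ℝ := fun y => 1 - h (1 - y)

theorem semiconj_reflect (h : ℝ → ℝ) : Semiconj (fun x : ℝ => 1 - x) h (reflect h) :=
  fun x => by simp [reflect]

theorem one_sub_mem_Icc {x : ℝ} (hx : x ∈ Icc (0:ℝ) 1) : 1 - x ∈ Icc (0:ℝ) 1 :=
  ⟨by linarith [hx.2], by linarith [hx.1]⟩

theorem mapsTo_reflect {h : ℝ → ℝ} (hh : MapsTo h (Icc 0 1) (Icc 0 1)) :
    MapsTo (reflect h) (Icc 0 1) (Icc 0 1) :=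
  fun _ hx => one_sub_mem_Icc (hh (one_sub_mem_Icc hx))

theorem monotoneOn_reflect {h : ℝ → ℝ} (hh : MonotoneOn h (Icc 0 1)) :
    MonotoneOn (reflect h) (Icc 0 1) :=
  fun _ hx _ hy hxy =>
    sub_le_sub_left (hh (one_sub_mem_Icc hy) (one_sub_mem_Icc hx) (by linarith)) 1

theorem IsAttractingFixedPt.of_reflect {h : ℝ → ℝ} {θ : ℝ}
    (hθ : IsAttractingFixedPt (reflect h) θ) : IsAttractingFixedPt h (1 - θ) := by
  obtain ⟨hθI, hfix, ε, hε, hattr⟩ := hθ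
  refine ⟨one_sub_mem_Icc hθI, by linarith [show 1 - h (1 - θ) = θ from hfix], ε, hε,
    fun x hx hxθ => ?_⟩
  have hlim := hattr (1 - x) (one_sub_mem_Icc hx) (by
    rwa [abs_sub_comm, sub_sub_eq_add_sub, add_comm, ← sub_sub_eq_add_sub])
  simp only [← ((semiconj_reflect h).iterate_right _).eq] at hlim
  simpa using hlim.const_sub 1

theorem IsMobiusOn.reflect {h : ℝ → ℝ} (hh : IsMobiusOn h) : IsMobiusOn (reflect h) := by
  obtain ⟨A, B, C, D, hdet, hh⟩ := hh
  refine ⟨A - C, C + D - A - B, -C, C + D, by convert hdet using 1; ring, fun x hx => ?_⟩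
  obtain ⟨hden, hval⟩ := hh (1 - x) (one_sub_mem_Icc hx)
  have heq : -C * x + (C + D) = C * (1 - x) + D := by ring
  refine ⟨heq ▸ hden, ?_⟩
  rw [_root_.reflect, hval, heq, one_sub_div hden]
  ring_nf

section WordOrbit

variable {α : Type*} {f g : α → α}

def applyWord (f g : α → α) (w : List Bool) (x : α) : α :=
  w.foldr (fun s z => if s then f z else g z) x

def wordOrbit (f g : α → α) (x₀ : α) : Set α :=
  {y | ∃ w : List Bool, w ≠ [] ∧ y = applyWord f g w x₀}

theorem applyWord_mem {s : Set α} (hf : MapsTo f s s) (hg : MapsTo g s s) {x : α} (hx : x ∈ s) :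
    ∀ w, applyWord f g w x ∈ s
  | [] => hx
  | true :: w => hf (applyWord_mem hf hg hx w)
  | false :: w => hg (applyWord_mem hf hg hx w)

theorem wordOrbit_subset {s : Set α} (hf : MapsTo f s s) (hg : MapsTo g s s) {x₀ : α}
    (hx₀ : x₀ ∈ s) : wordOrbit f g x₀ ⊆ s := by
  rintro _ ⟨w, -, rfl⟩
  exact applyWord_mem hf hg hx₀ w

theorem wordOrbit_subset_image_union {s : Set α} (hf : MapsTo f s s) (hg : MapsTo g s s)
    {x₀ : α} (hx₀ : x₀ ∈ s) : wordOrbit f g x₀ ⊆ f '' s ∪ g '' s := by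
  rintro _ ⟨_ | ⟨_ | _, w⟩, hw, rfl⟩
  · exact absurd rfl hw
  · exact Or.inr ⟨_, applyWord_mem hf hg hx₀ w, rfl⟩
  · exact Or.inl ⟨_, applyWord_mem hf hg hx₀ w, rfl⟩

theorem applyWord_swap (x : α) : ∀ w, applyWord g f w x = applyWord f g (w.map not) x
  | [] => rfl
  | true :: w => congrArg g (applyWord_swap x w)
  | false :: w => congrArg f (applyWord_swap x w)

theorem wordOrbit_comm (x₀ : α) : wordOrbit g f x₀ = wordOrbit f g x₀ := by
  have key : ∀ {f g : α → α}, wordOrbit g f x₀ ⊆ wordOrbit f g x₀ := by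
    rintro f g _ ⟨w, hw, rfl⟩
    exact ⟨w.map not, by simpa using hw, applyWord_swap x₀ w⟩
  exact key.antisymm key

theorem applyWord_semiconj {β : Type*} {φ : α → β} {f' g' : β → β} (hf : Semiconj φ f f')
    (hg : Semiconj φ g g') (x : α) : ∀ w, applyWord f' g' w (φ x) = φ (applyWord f g w x)
  | [] => rfl
  | true :: w => (congrArg f' (applyWord_semiconj hf hg x w)).trans (hf.eq _).symm
  | false :: w => (congrArg g' (applyWord_semiconj hf hg x w)).trans (hg.eq _).symm

theorem wordOrbit_semiconj {β : Type*} {φ : α → β} {f' g' : β → β} (hf : Semiconj φ f f')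
    (hg : Semiconj φ g g') (x₀ : α) : wordOrbit f' g' (φ x₀) = φ '' wordOrbit f g x₀ := by
  ext y
  simp only [wordOrbit, mem_image, mem_ofPred_eq, applyWord_semiconj hf hg]
  constructor
  · rintro ⟨w, hw, rfl⟩
    exact ⟨_, ⟨w, hw, rfl⟩, rfl⟩
  · rintro ⟨_, ⟨w, hw, rfl⟩, rfl⟩
    exact ⟨w, hw, rfl⟩

end WordOrbit

theorem image_union_eq_of_subset_closure_wordOrbit {α : Type*} [TopologicalSpace α] [T2Space α]
    {f g : α → α} {s : Set α} (hs : IsCompact s) (hfc : ContinuousOn f s)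
    (hgc : ContinuousOn g s) (hf : MapsTo f s s) (hg : MapsTo g s s) {x₀ : α} (hx₀ : x₀ ∈ s)
    (hdense : s ⊆ closure (wordOrbit f g x₀)) : f '' s ∪ g '' s = s := by
  have hclosed : IsClosed (f '' s ∪ g '' s) :=
    (hs.image_of_continuousOn hfc).isClosed.union (hs.image_of_continuousOn hgc).isClosed
  exact (union_subset hf.image_subset hg.image_subset).antisymm
    (hdense.trans (closure_minimal (wordOrbit_subset_image_union hf hg hx₀) hclosed))

theorem MonotoneOn.mapsTo_Icc_of_le_apply {α : Type*} [Preorder α] {h : α → α} {a b c : α}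
    (hh : MonotoneOn h (Icc a b)) (hmaps : MapsTo h (Icc a b) (Icc a b)) (hc : c ∈ Icc a b)
    (hch : c ≤ h c) : MapsTo h (Icc c b) (Icc c b) := fun x hx =>
  have hx' : x ∈ Icc a b := ⟨hc.1.trans hx.1, hx.2⟩
  ⟨hch.trans (hh hc hx' hx.1), (hmaps hx').2⟩

theorem map_lt_self_of_zero_mem_closure_wordOrbit {f g : ℝ → ℝ} (hfM : IsMobiusOn f)
    (hfmaps : MapsTo f (Icc 0 1) (Icc 0 1)) (hgmaps : MapsTo g (Icc 0 1) (Icc 0 1))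
    (hfmono : MonotoneOn f (Icc 0 1)) (hgmono : MonotoneOn g (Icc 0 1))
    (hf0 : f 0 = 0) (hf1 : f 1 < 1) (hg0 : 0 < g 0) {x₀ : ℝ} (hx₀ : x₀ ∈ Ioc (0:ℝ) 1)
    (h0 : (0:ℝ) ∈ closure (wordOrbit f g x₀)) {x : ℝ} (hx : x ∈ Ioc (0:ℝ) 1) : f x < x := by
  by_contra! hfx
  -- otherwise `[c, 1]` is invariant under `f` and `g`, and it contains `x₀`
  set c := min x₀ (min (g 0) x)
  have hcpos : 0 < c := lt_min hx₀.1 (lt_min hg0 hx.1)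
  have hcx : c ≤ x := (min_le_right _ _).trans (min_le_right _ _)
  have hcI : c ∈ Icc (0:ℝ) 1 := ⟨hcpos.le, hcx.trans hx.2⟩
  have hfc : MapsTo f (Icc c 1) (Icc c 1) :=
    hfmono.mapsTo_Icc_of_le_apply hfmaps hcI (hfM.self_le_of_le_map hf0 hf1 hx hfx ⟨hcpos, hcx⟩)
  have hgc : MapsTo g (Icc c 1) (Icc c 1) :=
    hgmono.mapsTo_Icc_of_le_apply hgmaps hcI
      (((min_le_right _ _).trans (min_le_left _ _)).trans (hgmono ⟨le_rfl, zero_le_one⟩ hcI hcI.1))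
  have hsub : closure (wordOrbit f g x₀) ⊆ Icc c 1 :=
    closure_minimal (wordOrbit_subset hfc hgc ⟨min_le_left _ _, hx₀.2⟩) isClosed_Icc
  exact hcpos.not_ge (hsub h0).1

theorem isAttractingFixedPt_zero_of_map_lt_self {f : ℝ → ℝ} (hfc : ContinuousOn f (Icc 0 1))
    (hfmaps : MapsTo f (Icc 0 1) (Icc 0 1)) (hf0 : f 0 = 0)
    (hlt : ∀ x ∈ Ioc (0:ℝ) 1, f x < x) : IsAttractingFixedPt f 0 := by
  refine ⟨left_mem_Icc.2 zero_le_one, hf0, 1, one_pos, fun x hx _ => ?_⟩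
  have hmem : ∀ n, f^[n] x ∈ Icc (0:ℝ) 1 := fun n => hfmaps.iterate n hx
  have hle : ∀ y ∈ Icc (0:ℝ) 1, f y ≤ y := fun y hy => by
    rcases hy.1.eq_or_lt with rfl | hpos
    · exact hf0.le
    · exact (hlt y ⟨hpos, hy.2⟩).le
  have hanti : Antitone fun n => f^[n] x :=
    antitone_nat_of_succ_le fun n => by
      rw [iterate_succ_apply']; exact hle _ (hmem n)
  have hbdd : BddBelow (range fun n => f^[n] x) := ⟨0, by rintro _ ⟨n, rfl⟩; exact (hmem n).1⟩
  have hlim := tendsto_atTop_ciInf hanti hbdd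
  set L := ⨅ n, f^[n] x
  have hLI : L ∈ Icc (0:ℝ) 1 := isClosed_Icc.mem_of_tendsto hlim (Eventually.of_forall hmem)
  have hfL : f L = L := by
    have hlimI : Tendsto (fun n => f^[n] x) atTop (𝓝[Icc 0 1] L) :=
      tendsto_nhdsWithin_iff.2 ⟨hlim, Eventually.of_forall hmem⟩
    refine tendsto_nhds_unique ?_ ((tendsto_add_atTop_iff_nat 1).2 hlim)
    simp only [iterate_succ_apply']
    exact (hfc L hLI).tendsto.comp hlimI
  rcases hLI.1.eq_or_lt with hL | hpos
  · rwa [hL]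
  · exact absurd hfL (hlt L ⟨hpos, hLI.2⟩).ne

theorem isAttractingFixedPt_zero_of_zero_mem_closure_wordOrbit {f g : ℝ → ℝ}
    (hfM : IsMobiusOn f) (hfmaps : MapsTo f (Icc 0 1) (Icc 0 1))
    (hgmaps : MapsTo g (Icc 0 1) (Icc 0 1)) (hfmono : MonotoneOn f (Icc 0 1))
    (hgmono : MonotoneOn g (Icc 0 1)) (hf0 : f 0 = 0) (hf1 : f 1 < 1) (hg0 : 0 < g 0)
    {x₀ : ℝ} (hx₀ : x₀ ∈ Ioc (0:ℝ) 1) (h0 : (0:ℝ) ∈ closure (wordOrbit f g x₀)) :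
    IsAttractingFixedPt f 0 :=
  isAttractingFixedPt_zero_of_map_lt_self hfM.continuousOn hfmaps hf0 fun _ hx =>
    map_lt_self_of_zero_mem_closure_wordOrbit hfM hfmaps hgmaps hfmono hgmono hf0 hf1 hg0 hx₀ h0 hx

theorem image_Icc_eq_of_map_zero_of_map_one {h : ℝ → ℝ} (hc : ContinuousOn h (Icc 0 1))
    (hmaps : MapsTo h (Icc 0 1) (Icc 0 1)) (h0 : h 0 = 0) (h1 : h 1 = 1) :
    h '' Icc 0 1 = Icc 0 1 :=
  hmaps.image_subset.antisymm <| by simpa only [h0, h1] using intermediate_value_Icc zero_le_one hc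

theorem endpoints_of_image_union_eq {f g : ℝ → ℝ} (hfc : ContinuousOn f (Icc 0 1))
    (hgc : ContinuousOn g (Icc 0 1)) (hfmaps : MapsTo f (Icc 0 1) (Icc 0 1))
    (hgmaps : MapsTo g (Icc 0 1) (Icc 0 1)) (hfmono : MonotoneOn f (Icc 0 1))
    (hgmono : MonotoneOn g (Icc 0 1)) (hfnotonto : f '' Icc 0 1 ≠ Icc 0 1)
    (hgnotonto : g '' Icc 0 1 ≠ Icc 0 1) (hcover : f '' Icc 0 1 ∪ g '' Icc 0 1 = Icc 0 1)
    (h0 : (0:ℝ) ∈ f '' Icc 0 1) : f 0 = 0 ∧ f 1 < 1 ∧ 0 < g 0 ∧ g 1 = 1 := by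
  have h0I : (0:ℝ) ∈ Icc (0:ℝ) 1 := left_mem_Icc.2 zero_le_one
  have h1I : (1:ℝ) ∈ Icc (0:ℝ) 1 := right_mem_Icc.2 zero_le_one
  have hf0 : f 0 = 0 := ((hfmono.image_Icc_subset h0).1).antisymm (hfmaps h0I).1
  have hf1 : f 1 < 1 := (hfmaps h1I).2.lt_of_ne fun h1 =>
    hfnotonto (image_Icc_eq_of_map_zero_of_map_one hfc hfmaps hf0 h1)
  have h1g : (1:ℝ) ∈ g '' Icc 0 1 :=
    (hcover.symm ▸ h1I : (1:ℝ) ∈ f '' Icc 0 1 ∪ g '' Icc 0 1).resolve_left fun h1 =>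
      hf1.not_ge (hfmono.image_Icc_subset h1).2
  have hg1 : g 1 = 1 := (hgmaps h1I).2.antisymm (hgmono.image_Icc_subset h1g).2
  have hg0 : 0 < g 0 := (hgmaps h0I).1.lt_of_ne fun h0 =>
    hgnotonto (image_Icc_eq_of_map_zero_of_map_one hgc hgmaps h0.symm hg1)
  exact ⟨hf0, hf1, hg0, hg1⟩

theorem isAttractingFixedPt_zero_one_of_subset_closure_wordOrbit {f g : ℝ → ℝ}
    (hfM : IsMobiusOn f) (hgM : IsMobiusOn g) (hfmaps : MapsTo f (Icc 0 1) (Icc 0 1))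
    (hgmaps : MapsTo g (Icc 0 1) (Icc 0 1)) (hfmono : MonotoneOn f (Icc 0 1))
    (hgmono : MonotoneOn g (Icc 0 1)) (hf0 : f 0 = 0) (hf1 : f 1 < 1) (hg0 : 0 < g 0)
    (hg1 : g 1 = 1) {x₀ : ℝ} (hx₀ : x₀ ∈ Ioo (0:ℝ) 1)
    (hdense : Icc 0 1 ⊆ closure (wordOrbit f g x₀)) :
    IsAttractingFixedPt f 0 ∧ IsAttractingFixedPt g 1 := by
  refine ⟨isAttractingFixedPt_zero_of_zero_mem_closure_wordOrbit hfM hfmaps hgmaps hfmono hgmono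
    hf0 hf1 hg0 (Ioo_subset_Ioc_self hx₀) (hdense (left_mem_Icc.2 zero_le_one)), ?_⟩
  have h0 : (0:ℝ) ∈ closure (wordOrbit (reflect g) (reflect f) (1 - x₀)) := by
    rw [wordOrbit_comm, wordOrbit_semiconj (semiconj_reflect f) (semiconj_reflect g) x₀]
    simpa using mem_closure_image (continuous_sub_left (1:ℝ)).continuousAt
      (hdense (right_mem_Icc.2 zero_le_one))
  have hg := isAttractingFixedPt_zero_of_zero_mem_closure_wordOrbit hgM.reflect
    (mapsTo_reflect hgmaps) (mapsTo_reflect hfmaps) (monotoneOn_reflect hgmono)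
    (monotoneOn_reflect hfmono) (by simp [reflect, hg1]) (by simpa [reflect] using hg0)
    (by simpa [reflect] using hf1) ⟨sub_pos.2 hx₀.2, by linarith [hx₀.1]⟩ h0
  simpa using hg.of_reflect

/-- if a semigroup orbit of two non-onto increasing Möbius self-maps of
[0,1] is dense, then the images cover [0,1] and the attracting fixed points are
{0,1}. -/
theorem stmt_8 (f g : ℝ → ℝ)
    (hfM : IsMobiusOn f) (hgM : IsMobiusOn g)
    (hfmaps : Set.MapsTo f (Set.Icc 0 1) (Set.Icc 0 1))
    (hgmaps : Set.MapsTo g (Set.Icc 0 1) (Set.Icc 0 1))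
    (hfmono : StrictMonoOn f (Set.Icc 0 1)) (hgmono : StrictMonoOn g (Set.Icc 0 1))
    (hfnotonto : f '' Set.Icc 0 1 ≠ Set.Icc 0 1)
    (hgnotonto : g '' Set.Icc 0 1 ≠ Set.Icc 0 1)
    (x₀ : ℝ) (hx₀ : x₀ ∈ Set.Ioo (0:ℝ) 1)
    (hdense : Set.Icc (0:ℝ) 1 ⊆ closure {y | ∃ w : List Bool, w ≠ [] ∧
        y = w.foldr (fun s z => if s then f z else g z) x₀}) :
    (f '' Set.Icc 0 1) ∪ (g '' Set.Icc 0 1) = Set.Icc 0 1 ∧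
    ∃ θf θg : ℝ, IsAttractingFixedPt f θf ∧ IsAttractingFixedPt g θg ∧
      ({θf, θg} : Set ℝ) = {0, 1} := by
  have hcover : f '' Icc 0 1 ∪ g '' Icc 0 1 = Icc 0 1 :=
    image_union_eq_of_subset_closure_wordOrbit isCompact_Icc hfM.continuousOn hgM.continuousOn
      hfmaps hgmaps (Ioo_subset_Icc_self hx₀) hdense
  refine ⟨hcover, ?_⟩
  rcases (hcover.symm ▸ left_mem_Icc.2 zero_le_one : (0:ℝ) ∈ f '' Icc 0 1 ∪ g '' Icc 0 1)
    with h0f | h0g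
  · obtain ⟨hf0, hf1, hg0, hg1⟩ := endpoints_of_image_union_eq hfM.continuousOn hgM.continuousOn
      hfmaps hgmaps hfmono.monotoneOn hgmono.monotoneOn hfnotonto hgnotonto hcover h0f
    obtain ⟨hf, hg⟩ := isAttractingFixedPt_zero_one_of_subset_closure_wordOrbit hfM hgM hfmaps
      hgmaps hfmono.monotoneOn hgmono.monotoneOn hf0 hf1 hg0 hg1 hx₀ hdense
    exact ⟨0, 1, hf, hg, rfl⟩
  · obtain ⟨hg0, hg1, hf0, hf1⟩ := endpoints_of_image_union_eq hgM.continuousOn hfM.continuousOn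
      hgmaps hfmaps hgmono.monotoneOn hfmono.monotoneOn hgnotonto hfnotonto
      (union_comm (g '' _) _ ▸ hcover) h0g
    obtain ⟨hg, hf⟩ := isAttractingFixedPt_zero_one_of_subset_closure_wordOrbit hgM hfM hgmaps
      hfmaps hgmono.monotoneOn hfmono.monotoneOn hg0 hg1 hf0 hf1 hx₀
      ((wordOrbit_comm (f := g) x₀).symm ▸ hdense)
    exact ⟨1, 0, hf, hg, pair_comm 1 0⟩
end

section
/- Let a, b, c > 0, define R(x) = ax/((−ab+a+c)x+ab) and T(x) = a/(x+a) on [0,1]. For even m and odd n positive integers, there exist γ, δ, μ, λ ≥ 0 such that R^m T^n(x) = (a + γ + δx)/(a + c b^{m−1} + b^m x + μ + λx) and (R^m T^n)'(x) = −a b^m / (a + c b^{m−1} + b^m x + μ + λx)² for all x ∈ [0,1]. -/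
/-!
Möbius maps compose like their `2 × 2` matrices as long as no intermediate denominator vanishes,
and the derivative of `y ↦ (p y + q) / (r y + s)` is `(p s - q r) / (r y + s)²`. With `R`, `T`
given by `matR`, `matT` and `matT ^ 2 = a • matTSq`, the map `R^m T^(2i+1)` is the Möbius map of
`M = matR ^ m * matTSq ^ i * matT`, of determinant `bᵐ · 1 · (-a)`. Lower bounds on the entries
of `M` and on the gaps between its rows, propagated one factor at a time, give the nonnegative
witnesses; they also keep every intermediate denominator positive on `[0, 1]`, so the matrix
formula holds on a neighbourhood of each point, which is what the derivative needs.
-/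

open Filter Topology Matrix

noncomputable section

def mobius (M : Matrix (Fin 2) (Fin 2) ℝ) (y : ℝ) : ℝ :=
  (M 0 0 * y + M 0 1) / (M 1 0 * y + M 1 1)

theorem mobius_mul_apply (A B : Matrix (Fin 2) (Fin 2) ℝ) {y : ℝ} (hy : B 1 0 * y + B 1 1 ≠ 0) :
    mobius (A * B) y = mobius A (mobius B y) := by
  simp only [mobius, Matrix.mul_apply, Fin.sum_univ_two]
  rw [mul_div_assoc', mul_div_assoc', div_add' _ _ _ hy, div_add' _ _ _ hy,
    div_div_div_cancel_right₀ hy]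
  congr 1 <;> ring

theorem mobius_smul (M : Matrix (Fin 2) (Fin 2) ℝ) {t : ℝ} (ht : t ≠ 0) :
    mobius (t • M) = mobius M := by
  funext y
  simp only [mobius, Matrix.smul_apply, smul_eq_mul, mul_assoc, ← mul_add]
  exact mul_div_mul_left _ _ ht

theorem hasDerivAt_mobius (M : Matrix (Fin 2) (Fin 2) ℝ) {x : ℝ} (hx : M 1 0 * x + M 1 1 ≠ 0) :
    HasDerivAt (mobius M) (M.det / (M 1 0 * x + M 1 1) ^ 2) x := by
  have hnum := ((hasDerivAt_id x).const_mul (M 0 0)).add_const (M 0 1)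
  have hden := ((hasDerivAt_id x).const_mul (M 1 0)).add_const (M 1 1)
  refine (hnum.div hden hx).congr_deriv ?_
  rw [det_fin_two]
  simp only [id, mul_one]
  ring

theorem iterate_mobius_apply (A B : Matrix (Fin 2) (Fin 2) ℝ) {y : ℝ} {k : ℕ}
    (h : ∀ j < k, (A ^ j * B) 1 0 * y + (A ^ j * B) 1 1 ≠ 0) :
    (mobius A)^[k] (mobius B y) = mobius (A ^ k * B) y := by
  induction k with
  | zero => simp
  | succ k ih =>
    rw [Function.iterate_succ_apply', ih fun j hj => h j (by omega),
      ← mobius_mul_apply _ _ (h k (by omega)), pow_succ', mul_assoc]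

theorem eventuallyEq_iterate_mobius (A B : Matrix (Fin 2) (Fin 2) ℝ) {g : ℝ → ℝ} {x : ℝ}
    {k : ℕ} (hg : g =ᶠ[𝓝 x] mobius B) (h : ∀ j < k, (A ^ j * B) 1 0 * x + (A ^ j * B) 1 1 ≠ 0) :
    (fun y => (mobius A)^[k] (g y)) =ᶠ[𝓝 x] mobius (A ^ k * B) := by
  have hden : ∀ᶠ y in 𝓝 x, ∀ j ∈ Set.Iio k, (A ^ j * B) 1 0 * y + (A ^ j * B) 1 1 ≠ 0 :=
    (eventually_all_finite (Set.finite_Iio k)).2 fun j hj =>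
      (by fun_prop : Continuous fun y => (A ^ j * B) 1 0 * y + (A ^ j * B) 1 1).continuousAt
        |>.eventually_ne (h j hj)
  filter_upwards [hg, hden] with y hgy hy
  rw [hgy, iterate_mobius_apply A B hy]

section

variable (a b c : ℝ)

def matT : Matrix (Fin 2) (Fin 2) ℝ := !![0, a; 1, a]

def matTSq : Matrix (Fin 2) (Fin 2) ℝ := !![1, a; 1, 1 + a]

def matR : Matrix (Fin 2) (Fin 2) ℝ := !![1, 0; 1 + c / a - b, b]

theorem mobius_matT : mobius (matT a) = fun x => a / (x + a) := by
  funext x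
  simp [mobius, matT]

theorem mobius_matR (ha : a ≠ 0) :
    mobius (matR a b c) = fun x => a * x / ((-(a * b) + a + c) * x + a * b) := by
  funext x
  simp only [mobius, matR, of_apply, cons_val', cons_val_zero, cons_val_one, empty_val',
    cons_val_fin_one, add_zero, one_mul]
  rw [← mul_div_mul_left x _ ha]
  congr 1
  field_simp
  ring

theorem det_matT : (matT a).det = -a := by simp [matT, det_fin_two]

theorem det_matTSq : (matTSq a).det = 1 := by simp [matTSq, det_fin_two]

theorem det_matR : (matR a b c).det = b := by simp [matR, det_fin_two]

theorem matT_pow_two_mul_matT (i : ℕ) :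
    matT a ^ (2 * i) * matT a = a ^ i • (matTSq a ^ i * matT a) := by
  have hsq : matT a ^ 2 = a • matTSq a := by
    ext i j; fin_cases i <;> fin_cases j <;> simp [matT, matTSq, sq, mul_add]
  rw [pow_mul, hsq, smul_pow, smul_mul_assoc]

end

theorem matT_pow_mul_matT_den_pos {a x : ℝ} (ha : 0 < a) (hx : 0 ≤ x) (j : ℕ) :
    0 < (matT a ^ j * matT a) 1 0 * x + (matT a ^ j * matT a) 1 1 := by
  suffices h : ∀ j, 0 ≤ (matT a ^ j * matT a) 0 0 ∧ 0 ≤ (matT a ^ j * matT a) 0 1 ∧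
      0 ≤ (matT a ^ j * matT a) 1 0 ∧ 0 < (matT a ^ j * matT a) 1 1 by
    obtain ⟨-, -, h10, h11⟩ := h j
    positivity
  intro j
  induction j with
  | zero => simpa [matT] using ⟨ha.le, ha⟩
  | succ j ih =>
    rw [pow_succ', mul_assoc]
    generalize matT a ^ j * matT a = N at ih
    obtain ⟨h00, h01, h10, h11⟩ := ih
    simp only [Matrix.mul_apply, Fin.sum_univ_two, matT, of_apply, cons_val', cons_val_zero,
      cons_val_one, empty_val', cons_val_fin_one, zero_mul, zero_add, one_mul]
    refine ⟨by positivity, by positivity, by positivity, by positivity⟩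

def CoeffBounds (ℓ u v : ℝ) (M : Matrix (Fin 2) (Fin 2) ℝ) : Prop :=
  0 ≤ M 0 0 ∧ ℓ ≤ M 0 1 ∧ u ≤ M 1 0 - M 0 0 ∧ v ≤ M 1 1 - M 0 1

namespace CoeffBounds

variable {a b c u v : ℝ} {M : Matrix (Fin 2) (Fin 2) ℝ}

theorem den_pos (h : CoeffBounds a u v M) (ha : 0 < a) (hu : 0 ≤ u) (hv : 0 ≤ v) {x : ℝ}
    (hx : 0 ≤ x) : 0 < M 1 0 * x + M 1 1 := by
  obtain ⟨h00, h01, h10, h11⟩ := h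
  nlinarith

theorem matTSq_mul (h : CoeffBounds a u v M) (ha : 0 ≤ a) (hu : 0 ≤ u) (hv : 0 ≤ v) :
    CoeffBounds a u v (matTSq a * M) := by
  obtain ⟨h00, h01, h10, h11⟩ := h
  simp only [CoeffBounds, Matrix.mul_apply, Fin.sum_univ_two, matTSq, of_apply, cons_val',
    cons_val_zero, cons_val_one, empty_val', cons_val_fin_one, one_mul]
  refine ⟨by nlinarith, by nlinarith, by nlinarith, by nlinarith⟩

theorem matR_mul (h : CoeffBounds a u v M) (ha : 0 < a) (hb : 0 ≤ b) (hc : 0 ≤ c) :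
    CoeffBounds a (b * u) (c + b * v) (matR a b c * M) := by
  obtain ⟨h00, h01, h10, h11⟩ := h
  simp only [CoeffBounds, Matrix.mul_apply, Fin.sum_univ_two, matR, of_apply, cons_val',
    cons_val_zero, cons_val_one, empty_val', cons_val_fin_one, one_mul, zero_mul, add_zero]
  have hca : 0 ≤ c / a := by positivity
  have hq : c ≤ c / a * M 0 1 :=
    calc c = c / a * a := by field_simp
      _ ≤ c / a * M 0 1 := mul_le_mul_of_nonneg_left h01 hca
  refine ⟨h00, h01, by nlinarith, by nlinarith⟩

theorem matR_pow_mul (h : CoeffBounds a u v M) (ha : 0 < a) (hb : 0 ≤ b) (hc : 0 ≤ c) (j : ℕ) :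
    CoeffBounds a (b ^ j * u) (b ^ j * v) (matR a b c ^ j * M) := by
  induction j with
  | zero => simpa using h
  | succ j ih =>
    have h' := ih.matR_mul ha hb hc
    rw [← mul_assoc (matR a b c), ← pow_succ'] at h'
    obtain ⟨h00, h01, h10, h11⟩ := h'
    rw [pow_succ' b, mul_assoc b, mul_assoc b]
    exact ⟨h00, h01, h10, by linarith⟩

end CoeffBounds

theorem coeffBounds_matTSq_pow_mul_matT {a : ℝ} (ha : 0 < a) (i : ℕ) :
    CoeffBounds a 1 0 (matTSq a ^ i * matT a) := by
  induction i with
  | zero => simp [CoeffBounds, matT]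
  | succ i ih =>
    rw [pow_succ', mul_assoc]
    exact ih.matTSq_mul ha.le zero_le_one le_rfl

theorem iterate_mobius_matT_eventuallyEq {a x : ℝ} (ha : 0 < a) (hx : 0 ≤ x) (i : ℕ) :
    (mobius (matT a))^[2 * i + 1] =ᶠ[𝓝 x] mobius (matTSq a ^ i * matT a) := by
  have h := eventuallyEq_iterate_mobius (matT a) (matT a) (k := 2 * i) EventuallyEq.rfl
    fun j _ => (matT_pow_mul_matT_den_pos ha hx j).ne'
  rwa [matT_pow_two_mul_matT, mobius_smul _ (pow_ne_zero i ha.ne')] at h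

theorem iterate_mobius_matR_eventuallyEq {a b c u v x : ℝ} {g : ℝ → ℝ}
    {N : Matrix (Fin 2) (Fin 2) ℝ}
    (ha : 0 < a) (hb : 0 ≤ b) (hc : 0 ≤ c) (hu : 0 ≤ u) (hv : 0 ≤ v) (hx : 0 ≤ x)
    (hN : CoeffBounds a u v N) (hg : g =ᶠ[𝓝 x] mobius N) (m : ℕ) :
    (fun y => (mobius (matR a b c))^[m] (g y)) =ᶠ[𝓝 x] mobius (matR a b c ^ m * N) :=
  eventuallyEq_iterate_mobius _ _ hg fun j _ =>
    ((hN.matR_pow_mul ha hb hc j).den_pos ha (by positivity) (by positivity) hx).ne'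

theorem stmt_11_general (a b c : ℝ) (ha : 0 < a) (hb : 0 < b) (hc : 0 < c)
    (R T : ℝ → ℝ)
    (hR : ∀ x : ℝ, R x = a * x / ((-(a * b) + a + c) * x + a * b))
    (hT : ∀ x : ℝ, T x = a / (x + a))
    (m n : ℕ) (hm0 : 0 < m) (hn : Odd n) :
    ∃ γ δ μ lam : ℝ, 0 ≤ γ ∧ 0 ≤ δ ∧ 0 ≤ μ ∧ 0 ≤ lam ∧
      ∀ x ∈ Set.Icc (0:ℝ) 1,
        R^[m] (T^[n] x) =
          (a + γ + δ * x) / (a + c * b ^ (m - 1) + b ^ m * x + μ + lam * x) ∧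
        deriv (fun z => R^[m] (T^[n] z)) x =
          -(a * b ^ m) / (a + c * b ^ (m - 1) + b ^ m * x + μ + lam * x) ^ 2 := by
  obtain ⟨i, rfl⟩ := hn
  obtain ⟨j, rfl⟩ := Nat.exists_eq_add_one_of_ne_zero hm0.ne'
  obtain rfl : R = mobius (matR a b c) := (funext hR).trans (mobius_matR a b c ha.ne').symm
  obtain rfl : T = mobius (matT a) := (funext hT).trans (mobius_matT a).symm
  set N := matTSq a ^ i * matT a
  have hN : CoeffBounds a 1 0 N := coeffBounds_matTSq_pow_mul_matT ha i
  set M := matR a b c ^ (j + 1) * N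
  have hM : CoeffBounds a (b ^ (j + 1)) (c * b ^ j) M := by
    have h := (hN.matR_mul ha hb.le hc.le).matR_pow_mul ha hb.le hc.le j
    rw [← mul_assoc (matR a b c ^ j), ← pow_succ] at h
    convert h using 1 <;> ring
  have hdet : M.det = -(a * b ^ (j + 1)) := by
    simp only [M, N, det_mul, det_pow, det_matR, det_matTSq, det_matT, one_pow]
    ring
  refine ⟨M 0 1 - a, M 0 0, M 1 1 - (a + c * b ^ j), M 1 0 - b ^ (j + 1), by linarith [hM.2.1],
    hM.1, by linarith [hM.2.1, hM.2.2.2], by linarith [hM.1, hM.2.2.1], fun x hx => ?_⟩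
  have hden := hM.den_pos ha (by positivity) (by positivity) hx.1
  have hloc := iterate_mobius_matR_eventuallyEq ha hb.le hc.le zero_le_one le_rfl hx.1 hN
    (iterate_mobius_matT_eventuallyEq ha hx.1 i) (j + 1)
  rw [hloc.eq_of_nhds, hloc.deriv_eq, (hasDerivAt_mobius M hden.ne').deriv, hdet,
    Nat.add_sub_cancel]
  constructor
  · unfold mobius
    congr 1 <;> ring
  · congr 2
    ring

/-- formulas for R^m T^n and its derivative, m even, n odd, for
R(x) = ax/((−ab+a+c)x+ab) and T(x) = a/(x+a). -/
theorem stmt_11 (a b c : ℝ) (ha : 0 < a) (hb : 0 < b) (hc : 0 < c)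
    (R T : ℝ → ℝ)
    (hR : ∀ x : ℝ, R x = a * x / ((-(a * b) + a + c) * x + a * b))
    (hT : ∀ x : ℝ, T x = a / (x + a))
    (m n : ℕ) (hm : Even m) (hm0 : 0 < m) (hn : Odd n) :
    ∃ γ δ μ lam : ℝ, 0 ≤ γ ∧ 0 ≤ δ ∧ 0 ≤ μ ∧ 0 ≤ lam ∧
      ∀ x ∈ Set.Icc (0:ℝ) 1,
        R^[m] (T^[n] x) =
          (a + γ + δ * x) / (a + c * b ^ (m - 1) + b ^ m * x + μ + lam * x) ∧
        deriv (fun z => R^[m] (T^[n] z)) x =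
          -(a * b ^ m) / (a + c * b ^ (m - 1) + b ^ m * x + μ + lam * x) ^ 2 :=
  stmt_11_general a b c ha hb hc R T hR hT m n hm0 hn
end
end

section
/- Let b ≥ 1 > c ≥ 0 and a > 0, with b > 1 if c = 0. Define R(x) = ax/((−ab+a+c)x+ab) and T(x) = a/(x+a). Then the orbit of any x ∈ [0,1] under the semigroup generated by R and T is dense in [0,1]. -/
/-!
In the coordinate `v = a / x - a` the maps `R` and `T` become `f v = b * v + c` and
`g v = a / (a + v)`. Both are non-expanding for the metric `|log u - log v|` on `(0, ∞)` (the
Hilbert metric of `(0, 1)`), and `g` contracts it by the factor `N / (N + a)` on `(0, N]`.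
Every `s > 0` can be written `s = f^m (g s')` with `s' > 0`, and `s'` is bounded when `s ≥ 1`: the
ranges `f^m (0, 1)` overlap because `c < 1` and exhaust `(0, ∞)` because `b - 1 + c > 0`. Hence
of two successive pullbacks of a target one is bounded, and the word performing them contracts by
a fixed ratio `κ < 1` near them. The orbit of any point comes within a bounded distance `B` of
every `s > 0`, so pulling the target back `2j` times and applying the word to a nearby orbit point
lands within `κ ^ j * B` of the target.
-/

namespace OrbitDensity

open Real Set

noncomputable section

def affine (b c : ℝ) : Function.End ℝ := fun v => b * v + c

def recip (a : ℝ) : Function.End ℝ := fun v => a / (a + v)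

def gen (a b c : ℝ) : Submonoid (Function.End ℝ) := Submonoid.closure {affine b c, recip a}

def orbit (a b c w₀ : ℝ) : Set ℝ := (fun Φ : Function.End ℝ => Φ w₀) '' gen a b c

-- The contraction factor of `recip a` on `(0, N]` for `N = M * exp B`, where `M` bounds one of
-- any two successive pullbacks.
def rate (a b c B : ℝ) : ℝ :=
  max 1 (a * b / (1 - c)) * exp B / (max 1 (a * b / (1 - c)) * exp B + a)

variable {a b c : ℝ}

lemma affine_mem_gen : affine b c ∈ gen a b c := Submonoid.subset_closure (by simp)

lemma recip_mem_gen : recip a ∈ gen a b c := Submonoid.subset_closure (by simp)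

lemma recip_div_sub (ha : a ≠ 0) (τ : ℝ) : recip a (a / τ - a) = τ := by
  simp only [recip, add_sub_cancel, div_div_cancel₀ ha]

lemma rate_nonneg (ha : 0 ≤ a) (B : ℝ) : 0 ≤ rate a b c B := by
  unfold rate; positivity

lemma rate_lt_one (ha : 0 < a) (B : ℝ) : rate a b c B < 1 := by
  unfold rate
  rw [div_lt_one (by positivity)]
  linarith

lemma apply_pos_of_mem_gen (ha : 0 < a) (hb : 0 < b) (hc : 0 ≤ c) {Φ : Function.End ℝ}
    (hΦ : Φ ∈ gen a b c) {v : ℝ} (hv : 0 < v) : 0 < Φ v := by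
  induction hΦ using Submonoid.closure_induction generalizing v with
  | mem Φ hΦ =>
    rcases hΦ with rfl | rfl
    · exact add_pos_of_pos_of_nonneg (mul_pos hb hv) hc
    · exact div_pos ha (add_pos ha hv)
  | one => exact hv
  | mul Φ Ψ _ _ hΦ hΨ => exact hΦ (hΨ hv)

lemma dist_log_affine_le_mul (hb : 0 < b) (hc : 0 ≤ c) {u v N : ℝ} (hu : 0 < u) (hv : 0 < v)
    (huN : u ≤ N) (hvN : v ≤ N) :
    dist (log (b * u + c)) (log (b * v + c)) ≤ b * N / (b * N + c) * dist (log u) (log v) := by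
  have hN : 0 < N := hu.trans_le huN
  have hderiv : ∀ x : ℝ, HasDerivAt (fun x => log (b * exp x + c))
      (b * exp x / (b * exp x + c)) x := fun x =>
    ((hasDerivAt_exp x).const_mul b |>.add_const c).log (by positivity)
  have hbound : ∀ x ∈ Iic (log N), ‖deriv (fun x => log (b * exp x + c)) x‖ ≤
      b * N / (b * N + c) := by
    intro x hx
    have hxN : exp x ≤ N := (exp_le_exp.2 hx).trans_eq (exp_log hN)
    rw [(hderiv x).deriv, Real.norm_of_nonneg (by positivity),
      div_le_div_iff₀ (by positivity) (by positivity)]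
    nlinarith [mul_le_mul_of_nonneg_left hxN (mul_nonneg hb.le hc), exp_pos x]
  have := (convex_Iic (log N)).norm_image_sub_le_of_norm_deriv_le
    (fun x _ => (hderiv x).differentiableAt) hbound (log_le_log hv hvN) (log_le_log hu huN)
  simpa only [exp_log hu, exp_log hv, Real.dist_eq, Real.norm_eq_abs] using this

lemma dist_log_affine_le (hb : 0 < b) (hc : 0 ≤ c) {u v : ℝ} (hu : 0 < u) (hv : 0 < v) :
    dist (log (b * u + c)) (log (b * v + c)) ≤ dist (log u) (log v) := by
  have hN : 0 < max u v := lt_max_of_lt_left hu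
  refine (dist_log_affine_le_mul hb hc hu hv (le_max_left u v) (le_max_right u v)).trans ?_
  refine mul_le_of_le_one_left dist_nonneg ((div_le_one (by positivity)).2 ?_)
  linarith

lemma dist_log_recip_eq (ha : 0 < a) {u v : ℝ} (hu : 0 < u) (hv : 0 < v) :
    dist (log (recip a u)) (log (recip a v)) = dist (log (1 * u + a)) (log (1 * v + a)) := by
  simp only [recip, one_mul, Real.dist_eq]
  rw [log_div ha.ne' (by positivity), log_div ha.ne' (by positivity), abs_sub_comm, add_comm a u,
    add_comm a v]
  ring_nf

lemma dist_log_recip_le_mul (ha : 0 < a) {u v N : ℝ} (hu : 0 < u) (hv : 0 < v)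
    (huN : u ≤ N) (hvN : v ≤ N) :
    dist (log (recip a u)) (log (recip a v)) ≤ N / (N + a) * dist (log u) (log v) := by
  simpa only [dist_log_recip_eq ha hu hv, one_mul] using
    dist_log_affine_le_mul one_pos ha.le hu hv huN hvN

lemma dist_log_recip_le (ha : 0 < a) {u v : ℝ} (hu : 0 < u) (hv : 0 < v) :
    dist (log (recip a u)) (log (recip a v)) ≤ dist (log u) (log v) := by
  simpa only [dist_log_recip_eq ha hu hv] using dist_log_affine_le one_pos ha.le hu hv

lemma dist_log_apply_le_of_mem_gen (ha : 0 < a) (hb : 0 < b) (hc : 0 ≤ c)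
    {Φ : Function.End ℝ} (hΦ : Φ ∈ gen a b c) {u v : ℝ} (hu : 0 < u) (hv : 0 < v) :
    dist (log (Φ u)) (log (Φ v)) ≤ dist (log u) (log v) := by
  induction hΦ using Submonoid.closure_induction generalizing u v with
  | mem Φ hΦ =>
    rcases hΦ with rfl | rfl
    · exact dist_log_affine_le hb hc hu hv
    · exact dist_log_recip_le ha hu hv
  | one => exact le_rfl
  | mul Φ Ψ _ hΨ hΦ' hΨ' =>
    exact (hΦ' (apply_pos_of_mem_gen ha hb hc hΨ hu) (apply_pos_of_mem_gen ha hb hc hΨ hv)).trans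
      (hΨ' hu hv)

lemma affine_pow_succ_apply (n : ℕ) (v : ℝ) :
    (affine b c ^ (n + 1)) v = b * (affine b c ^ n) v + c := by
  rw [pow_succ']
  rfl

lemma affine_pow_apply (n : ℕ) (v : ℝ) :
    (affine b c ^ n) v = (affine b c ^ n) 0 + b ^ n * v := by
  induction n with
  | zero => show v = 0 + b ^ 0 * v; ring
  | succ n ih =>
    rw [affine_pow_succ_apply, affine_pow_succ_apply, ih]
    ring

lemma add_mul_le_affine_pow_apply (hb : 1 ≤ b) {v : ℝ} (hδ : 0 ≤ (b - 1) * v + c) (n : ℕ) :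
    v + n * ((b - 1) * v + c) ≤ (affine b c ^ n) v := by
  induction n with
  | zero => show v + (0 : ℕ) * _ ≤ v; simp
  | succ n ih =>
    have hv : v ≤ (affine b c ^ n) v := le_trans (by nlinarith) ih
    have := mul_le_mul_of_nonneg_left hv (sub_nonneg.2 hb)
    rw [affine_pow_succ_apply]
    push_cast
    nlinarith

lemma exists_lt_affine_pow_apply (hb : 1 ≤ b) {v : ℝ} (hδ : 0 < (b - 1) * v + c) (s : ℝ) :
    ∃ n : ℕ, s < (affine b c ^ n) v := by
  obtain ⟨n, hn⟩ := exists_nat_gt ((s - v) / ((b - 1) * v + c))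
  refine ⟨n, lt_of_lt_of_le ?_ (add_mul_le_affine_pow_apply hb hδ.le n)⟩
  rw [div_lt_iff₀ hδ] at hn
  linarith

lemma exists_affine_pow_apply_eq (hb : 1 ≤ b) (hc1 : c < 1) (hd : 0 < b - 1 + c)
    {s : ℝ} (hs : 0 < s) :
    ∃ m : ℕ, ∃ r, 0 < r ∧ r < 1 ∧ (affine b c ^ m) r = s ∧ (1 ≤ s → (1 - c) / b ≤ r) := by
  classical
  have hex := exists_lt_affine_pow_apply hb (by linarith : 0 < (b - 1) * 1 + c) s
  have hupper := Nat.find_spec hex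
  rcases h : Nat.find hex with _ | k
  · rw [h] at hupper
    exact ⟨0, s, hs, hupper, rfl, fun h1 => absurd hupper (not_lt.2 h1)⟩
  have hmin : (affine b c ^ k) 1 ≤ s := not_lt.1 (Nat.find_min hex (by omega))
  rw [h, affine_pow_apply] at hupper
  rw [affine_pow_apply] at hmin
  -- the ranges `affine ^ k (0, 1)` and `affine ^ (k + 1) (0, 1)` overlap since `c < 1`
  have hstart : (affine b c ^ (k + 1)) 0 = (affine b c ^ k) 0 + c * b ^ k := by
    rw [pow_succ]
    show (affine b c ^ k) (b * 0 + c) = _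
    rw [mul_zero, zero_add, affine_pow_apply k c, mul_comm c]
  have hgap : 0 < (1 - c) * b ^ k := mul_pos (by linarith) (by positivity)
  have hbk : 0 < b ^ (k + 1) := by positivity
  refine ⟨k + 1, (s - (affine b c ^ (k + 1)) 0) / b ^ (k + 1), div_pos (by linarith) hbk,
    (div_lt_one hbk).2 (by linarith), ?_, fun _ => ?_⟩
  · rw [affine_pow_apply, mul_div_cancel₀ _ hbk.ne']
    ring
  · rw [div_le_div_iff₀ (by linarith) hbk, pow_succ]
    nlinarith

lemma exists_pow_mul_recip_apply_eq (ha : 0 < a) (hb : 1 ≤ b) (hc1 : c < 1)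
    (hd : 0 < b - 1 + c) {s : ℝ} (hs : 0 < s) :
    ∃ m : ℕ, ∃ s' > 0, (affine b c ^ m * recip a) s' = s ∧
      min s s' ≤ max 1 (a * b / (1 - c)) := by
  obtain ⟨m, r, hr0, hr1, hm, hbound⟩ := exists_affine_pow_apply_eq hb hc1 hd hs
  refine ⟨m, a / r - a, sub_pos.2 ((lt_div_iff₀ hr0).2 (by nlinarith)), ?_, ?_⟩
  · show (affine b c ^ m) (recip a (a / r - a)) = s
    rw [recip_div_sub ha.ne', hm]
  · by_cases h1 : 1 ≤ s
    · refine (min_le_right _ _).trans (le_max_of_le_right ?_)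
      have hq : 0 < (1 - c) / b := div_pos (by linarith) (by linarith)
      calc a / r - a ≤ a / r := by linarith
        _ ≤ a / ((1 - c) / b) := div_le_div_of_nonneg_left ha.le hq (hbound h1)
        _ = a * b / (1 - c) := by rw [div_div_eq_mul_div]
    · exact (min_le_left _ _).trans ((not_le.1 h1).le.trans (le_max_left _ _))

lemma le_mul_exp_of_dist_log_le {u v B : ℝ} (hu : 0 < u) (hv : 0 < v)
    (h : dist (log u) (log v) ≤ B) : u ≤ v * exp B := by
  have := (abs_sub_le_iff.1 (Real.dist_eq _ _ ▸ h)).1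
  calc u = exp (log u) := (exp_log hu).symm
    _ ≤ exp (log v + B) := exp_le_exp.2 (by linarith)
    _ = v * exp B := by rw [exp_add, exp_log hv]

lemma dist_log_pow_mul_recip_le_mul (ha : 0 < a) (hb : 0 < b) (hc : 0 ≤ c) (m : ℕ)
    {M B u v : ℝ} (hu : 0 < u) (hv : 0 < v) (hvM : v ≤ M) (h : dist (log u) (log v) ≤ B) :
    dist (log ((affine b c ^ m * recip a) u)) (log ((affine b c ^ m * recip a) v)) ≤
      M * exp B / (M * exp B + a) * dist (log u) (log v) := by
  have hexp : 1 ≤ exp B := one_le_exp (dist_nonneg.trans h)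
  have hvN : v ≤ M * exp B := hvM.trans (le_mul_of_one_le_right (hv.le.trans hvM) hexp)
  have huN : u ≤ M * exp B :=
    (le_mul_exp_of_dist_log_le hu hv h).trans (mul_le_mul_of_nonneg_right hvM (exp_pos B).le)
  exact (dist_log_apply_le_of_mem_gen ha hb hc (pow_mem affine_mem_gen m)
    (div_pos ha (add_pos ha hu)) (div_pos ha (add_pos ha hv))).trans
    (dist_log_recip_le_mul ha hu hv huN hvN)

-- Of the two successive pullbacks `s₁`, `s₂` of `s` one is bounded (`hmin`), so `recip a`
-- contracts in the outer or in the inner branch.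
lemma exists_mem_gen_dist_log_le_rate_mul (ha : 0 < a) (hb : 1 ≤ b) (hc0 : 0 ≤ c) (hc1 : c < 1)
    (hd : 0 < b - 1 + c) (B : ℝ) {s : ℝ} (hs : 0 < s) :
    ∃ s' > 0, ∃ Ψ ∈ gen a b c, ∀ p > 0, dist (log p) (log s') ≤ B →
      dist (log (Ψ p)) (log s) ≤ rate a b c B * dist (log p) (log s') := by
  have hb0 : 0 < b := by linarith
  have hφ : ∀ m : ℕ, affine b c ^ m * recip a ∈ gen a b c :=
    fun m => mul_mem (pow_mem affine_mem_gen m) recip_mem_gen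
  obtain ⟨m₀, s₁, hs₁, rfl, -⟩ := exists_pow_mul_recip_apply_eq ha hb hc1 hd hs
  obtain ⟨m₁, s₂, hs₂, rfl, hmin⟩ := exists_pow_mul_recip_apply_eq ha hb hc1 hd hs₁
  refine ⟨s₂, hs₂, _, mul_mem (hφ m₀) (hφ m₁), fun p hp hpB => ?_⟩
  set φ₁ := affine b c ^ m₁ * recip a
  have hq : 0 < φ₁ p := apply_pos_of_mem_gen ha hb0 hc0 (hφ m₁) hp
  have hq' : dist (log (φ₁ p)) (log (φ₁ s₂)) ≤ dist (log p) (log s₂) :=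
    dist_log_apply_le_of_mem_gen ha hb0 hc0 (hφ m₁) hp hs₂
  rcases min_le_iff.1 hmin with h₁ | h₂
  · calc _ ≤ rate a b c B * dist (log (φ₁ p)) (log (φ₁ s₂)) :=
          dist_log_pow_mul_recip_le_mul ha hb0 hc0 m₀ hq hs₁ h₁ (hq'.trans hpB)
      _ ≤ rate a b c B * dist (log p) (log s₂) :=
          mul_le_mul_of_nonneg_left hq' (rate_nonneg ha.le B)
  · calc _ ≤ dist (log (φ₁ p)) (log (φ₁ s₂)) :=
          dist_log_apply_le_of_mem_gen ha hb0 hc0 (hφ m₀) hq hs₁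
      _ ≤ _ := dist_log_pow_mul_recip_le_mul ha hb0 hc0 m₁ hp hs₂ h₂ hpB

lemma exists_mem_gen_dist_log_le_rate_pow_mul (ha : 0 < a) (hb : 1 ≤ b) (hc0 : 0 ≤ c)
    (hc1 : c < 1) (hd : 0 < b - 1 + c) {B : ℝ} (hB : 0 ≤ B) (j : ℕ) {s : ℝ} (hs : 0 < s) :
    ∃ s' > 0, ∃ Ψ ∈ gen a b c, ∀ p > 0, dist (log p) (log s') ≤ B →
      dist (log (Ψ p)) (log s) ≤ rate a b c B ^ j * B := by
  induction j generalizing s with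
  | zero => exact ⟨s, hs, 1, one_mem _, fun p _ h => by rw [pow_zero, one_mul]; exact h⟩
  | succ j ih =>
    obtain ⟨s₁, hs₁, Ψ₁, hΨ₁, h₁⟩ := exists_mem_gen_dist_log_le_rate_mul ha hb hc0 hc1 hd B hs
    obtain ⟨s', hs', Ψ₂, hΨ₂, h₂⟩ := ih hs₁
    refine ⟨s', hs', Ψ₁ * Ψ₂, mul_mem hΨ₁ hΨ₂, fun p hp hpB => ?_⟩
    have hκ := rate_nonneg (b := b) (c := c) ha.le B
    have hΨ₂p := h₂ p hp hpB
    have hjB : rate a b c B ^ j * B ≤ B :=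
      mul_le_of_le_one_left hB (pow_le_one₀ hκ (rate_lt_one ha B).le)
    calc dist (log (Ψ₁ (Ψ₂ p))) (log s)
        ≤ rate a b c B * dist (log (Ψ₂ p)) (log s₁) :=
          h₁ _ (apply_pos_of_mem_gen ha (by linarith) hc0 hΨ₂ hp) (hΨ₂p.trans hjB)
      _ ≤ rate a b c B * (rate a b c B ^ j * B) := mul_le_mul_of_nonneg_left hΨ₂p hκ
      _ = rate a b c B ^ (j + 1) * B := by ring

lemma exists_dist_le_of_le_add (ℓ : ℕ → ℝ) {s B : ℝ} (h0 : ℓ 0 ≤ s) (hunb : ∃ n, s < ℓ n)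
    (hstep : ∀ n, ℓ (n + 1) ≤ ℓ n + B) : ∃ n, dist (ℓ n) s ≤ B := by
  classical
  obtain ⟨k, hk⟩ : ∃ k, k + 1 = Nat.find hunb :=
    Nat.exists_add_one_eq.2 (Nat.pos_of_ne_zero fun h => (Nat.find_eq_zero hunb).1 h |>.not_ge h0)
  have hk₁ : s < ℓ (k + 1) := hk ▸ Nat.find_spec hunb
  have hk₀ : ℓ k ≤ s := not_lt.1 (Nat.find_min hunb (by omega))
  refine ⟨k, ?_⟩
  rw [Real.dist_eq, abs_le]
  constructor <;> linarith [hstep k]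

lemma exists_dist_log_affine_pow_apply_le (hb : 1 ≤ b) (hc0 : 0 ≤ c) {w₀ τ : ℝ} (hw₀ : 0 < w₀)
    (hδ : 0 < (b - 1) * w₀ + c) (hτ : w₀ ≤ τ) :
    ∃ n : ℕ, dist (log ((affine b c ^ n) w₀)) (log τ) ≤ log (b + c / w₀) := by
  have hW : ∀ n, w₀ ≤ (affine b c ^ n) w₀ := fun n =>
    (le_add_of_nonneg_right (by positivity)).trans (add_mul_le_affine_pow_apply hb hδ.le n)
  have hWpos : ∀ n, 0 < (affine b c ^ n) w₀ := fun n => hw₀.trans_le (hW n)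
  refine exists_dist_le_of_le_add _ (log_le_log hw₀ hτ) ?_ fun n => ?_
  · obtain ⟨n, hn⟩ := exists_lt_affine_pow_apply hb hδ τ
    exact ⟨n, log_lt_log (hw₀.trans_le hτ) hn⟩
  · have hc : c ≤ c / w₀ * (affine b c ^ n) w₀ := by
      simpa only [div_mul_cancel₀ c hw₀.ne'] using
        mul_le_mul_of_nonneg_left (hW n) (div_nonneg hc0 hw₀.le)
    rw [← log_mul (hWpos n).ne' (by positivity)]
    refine log_le_log (hWpos _) ?_
    rw [affine_pow_succ_apply]
    linarith

lemma exists_mem_gen_dist_log_le (ha : 0 < a) (hb : 1 ≤ b) (hc0 : 0 ≤ c) (hd : 0 < b - 1 + c)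
    {w₀ : ℝ} (hw₀ : 0 < w₀) :
    ∃ B, ∀ τ > 0, ∃ Φ ∈ gen a b c, dist (log (Φ w₀)) (log τ) ≤ B := by
  have hδ : 0 < (b - 1) * w₀ + c := by
    rcases le_or_gt w₀ 1 with h | h <;> nlinarith
  refine ⟨max (log (b + c / w₀)) (log w₀ - log (recip a w₀)), fun τ hτ => ?_⟩
  rcases le_or_gt w₀ τ with h₁ | h₁
  · obtain ⟨n, hn⟩ := exists_dist_log_affine_pow_apply_le hb hc0 hw₀ hδ h₁
    exact ⟨_, pow_mem affine_mem_gen n, hn.trans (le_max_left _ _)⟩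
  have hrw₀ : 0 < recip a w₀ := div_pos ha (add_pos ha hw₀)
  rcases le_or_gt τ (recip a w₀) with h₂ | h₂
  · have hτ' : w₀ ≤ a / τ - a := by
      rw [le_sub_iff_add_le', le_div_iff₀ hτ]
      rwa [recip, le_div_iff₀ (add_pos ha hw₀), mul_comm] at h₂
    obtain ⟨n, hn⟩ := exists_dist_log_affine_pow_apply_le hb hc0 hw₀ hδ hτ'
    refine ⟨recip a * affine b c ^ n, mul_mem recip_mem_gen (pow_mem affine_mem_gen n), ?_⟩
    calc dist (log (recip a ((affine b c ^ n) w₀))) (log τ)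
        = dist (log (recip a ((affine b c ^ n) w₀))) (log (recip a (a / τ - a))) := by
          rw [recip_div_sub ha.ne']
      _ ≤ dist (log ((affine b c ^ n) w₀)) (log (a / τ - a)) :=
          dist_log_recip_le ha (apply_pos_of_mem_gen ha (by linarith) hc0
            (pow_mem affine_mem_gen n) hw₀) (hw₀.trans_le hτ')
      _ ≤ _ := hn.trans (le_max_left _ _)
  · refine ⟨1, one_mem _, ?_⟩
    show dist (log w₀) (log τ) ≤ _
    rw [Real.dist_eq, abs_of_nonneg (sub_nonneg.2 (log_le_log hτ h₁.le))]
    exact le_max_of_le_right (by linarith [log_le_log hrw₀ h₂.le])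

theorem Ioi_subset_closure_orbit (ha : 0 < a) (hb : 1 ≤ b) (hc0 : 0 ≤ c) (hc1 : c < 1)
    (hd : 0 < b - 1 + c) {w₀ : ℝ} (hw₀ : 0 < w₀) :
    Ioi 0 ⊆ closure (orbit a b c w₀) := by
  intro t ht
  obtain ⟨B, hB⟩ := exists_mem_gen_dist_log_le ha hb hc0 hd hw₀
  have hB0 : 0 ≤ B := by
    obtain ⟨_, _, h⟩ := hB 1 one_pos
    exact dist_nonneg.trans h
  have hpos : ∀ Φ ∈ gen a b c, 0 < Φ w₀ := fun Φ hΦ =>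
    apply_pos_of_mem_gen ha (by linarith) hc0 hΦ hw₀
  have hlog : log t ∈ closure (log '' orbit a b c w₀) := by
    refine Metric.mem_closure_iff.2 fun ε hε => ?_
    obtain ⟨j, hj⟩ := exists_pow_lt_of_lt_one (div_pos hε (by linarith : 0 < B + 1))
      (rate_lt_one (b := b) (c := c) ha B)
    obtain ⟨s, hs, Ψ, hΨ, hΨs⟩ :=
      exists_mem_gen_dist_log_le_rate_pow_mul ha hb hc0 hc1 hd hB0 j ht
    obtain ⟨Φ, hΦ, hΦs⟩ := hB s hs
    refine ⟨_, ⟨_, ⟨Ψ * Φ, mul_mem hΨ hΦ, rfl⟩, rfl⟩, ?_⟩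
    rw [dist_comm]
    calc dist (log (Ψ (Φ w₀))) (log t) ≤ rate a b c B ^ j * B := hΨs _ (hpos Φ hΦ) hΦs
      _ ≤ rate a b c B ^ j * (B + 1) := by
          have := pow_nonneg (rate_nonneg (b := b) (c := c) ha.le B) j
          nlinarith
      _ < ε := (lt_div_iff₀ (by linarith)).1 hj
  have hexp : MapsTo exp (log '' orbit a b c w₀) (orbit a b c w₀) := by
    rintro _ ⟨_, ⟨Φ, hΦ, rfl⟩, rfl⟩
    exact ⟨Φ, hΦ, (exp_log (hpos Φ hΦ)).symm⟩
  simpa only [exp_log ht] using map_mem_closure continuous_exp hlog hexp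

lemma exists_foldr_recip_eq (ha : 0 < a) (hb : 0 < b) (hc : 0 ≤ c) {R T : ℝ → ℝ}
    (hR : ∀ x : ℝ, R x = a * x / ((-(a * b) + a + c) * x + a * b))
    (hT : ∀ x : ℝ, T x = a / (x + a)) {Φ : Function.End ℝ} (hΦ : Φ ∈ gen a b c) :
    ∃ w : List Bool, ∀ v > 0,
      w.foldr (fun s z => if s then R z else T z) (recip a v) = recip a (Φ v) := by
  induction hΦ using Submonoid.closure_induction with
  | mem Φ hΦ =>
    rcases hΦ with rfl | rfl
    · refine ⟨[true], fun v hv => ?_⟩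
      have hav : 0 < a + v := by positivity
      have hden : (-(a * b) + a + c) * recip a v + a * b = a * (a + affine b c v) / (a + v) := by
        simp only [recip, affine]
        field_simp
        ring
      have : 0 < a + affine b c v := by simp only [affine]; positivity
      simp only [List.foldr_cons, List.foldr_nil, if_true]
      rw [hR, hden]
      simp only [recip]
      field_simp
    · exact ⟨[false], fun v _ => by simp [hT, recip, add_comm]⟩
  | one => exact ⟨[], fun v _ => rfl⟩
  | mul Φ Ψ _ hΨ hΦ' hΨ' =>
    obtain ⟨w₁, h₁⟩ := hΦ'
    obtain ⟨w₂, h₂⟩ := hΨ'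
    refine ⟨w₁ ++ w₂, fun v hv => ?_⟩
    rw [List.foldr_append, h₂ v hv, h₁ _ (apply_pos_of_mem_gen ha hb hc hΨ hv)]
    rfl

lemma image_recip_orbit_subset (ha : 0 < a) (hb : 0 < b) (hc : 0 ≤ c) {R T : ℝ → ℝ}
    (hR : ∀ x : ℝ, R x = a * x / ((-(a * b) + a + c) * x + a * b))
    (hT : ∀ x : ℝ, T x = a / (x + a)) {x : ℝ} (hx : 0 ≤ x) :
    recip a '' orbit a b c (recip a x) ⊆
      {y | ∃ w : List Bool, w ≠ [] ∧ y = w.foldr (fun s z => if s then R z else T z) x} := by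
  rintro _ ⟨_, ⟨Φ, hΦ, rfl⟩, rfl⟩
  obtain ⟨w, hw⟩ := exists_foldr_recip_eq ha hb hc hR hT hΦ
  refine ⟨w ++ [false, false], by simp, ?_⟩
  have hx' : 0 < recip a x := div_pos ha (by linarith)
  -- `T (T x) = recip a (recip a x)`
  rw [← hw _ hx', List.foldr_append]
  simp [hT, recip, add_comm]

lemma Ioo_subset_closure_image_recip_orbit (ha : 0 < a) (hb : 1 ≤ b) (hc0 : 0 ≤ c)
    (hc1 : c < 1) (hd : 0 < b - 1 + c) {w₀ : ℝ} (hw₀ : 0 < w₀) :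
    Ioo 0 1 ⊆ closure (recip a '' orbit a b c w₀) := by
  intro y hy
  have ht : 0 < a / y - a := sub_pos.2 ((lt_div_iff₀ hy.1).2 (by nlinarith [hy.2]))
  have hcont : ContinuousAt (recip a) (a / y - a) := by
    unfold recip
    fun_prop (disch := positivity)
  simpa only [recip_div_sub ha.ne'] using hcont.continuousWithinAt.mem_closure_image
    (Ioi_subset_closure_orbit ha hb hc0 hc1 hd hw₀ ht)

end

end OrbitDensity

open OrbitDensity

/-- density of orbits for R(x) = ax/((−ab+a+c)x+ab) and
T(x) = a/(x+a), with b ≥ 1 > c ≥ 0, a > 0, and b > 1 if c = 0. -/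
theorem stmt_12 (a b c : ℝ) (ha : 0 < a) (hb : 1 ≤ b) (hc1 : c < 1) (hc0 : 0 ≤ c)
    (hbc : c = 0 → 1 < b)
    (R T : ℝ → ℝ)
    (hR : ∀ x : ℝ, R x = a * x / ((-(a * b) + a + c) * x + a * b))
    (hT : ∀ x : ℝ, T x = a / (x + a)) :
    ∀ x ∈ Set.Icc (0:ℝ) 1, Set.Icc (0:ℝ) 1 ⊆
      closure {y | ∃ w : List Bool, w ≠ [] ∧
        y = w.foldr (fun s z => if s then R z else T z) x} := by
  intro x hx
  have hd : 0 < b - 1 + c := by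
    rcases hc0.eq_or_lt with h | h
    · linarith [hbc h.symm]
    · linarith
  have hx' : 0 < recip a x := div_pos ha (by linarith [hx.1])
  rw [← closure_Ioo zero_ne_one]
  refine closure_minimal ?_ isClosed_closure
  exact (Ioo_subset_closure_image_recip_orbit ha hb hc0 hc1 hd hx').trans
    (closure_mono (image_recip_orbit_subset ha (by linarith) hc0 hR hT hx.1))
end
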